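/- arXiv:1309.4298 — 6 statements merged into one kernel-verified Lean document; each statement's English description precedes it below -/
import Mathlib

section
/- The map Π from the set T_ℓ (pairs T ⊗ T' with T ∈ T_ℓ^+, T' ∈ T_0^-, and α_T ≥ β_{T'} - 1) to the set T_{[1,ℓ]} of strictly increasing ℓ-tuples of integers, defined by Π(T ⊗ T') = (j_1 < ⋯ < j_{α_T} < i_{α_T+1} < ⋯ < i_ℓ) where T = (⋯ < i_{ℓ-1} < i_ℓ) and T' = (j_1 < j_2 < ⋯), is a bijection. -/
attribute [local instance] Classical.propDecidable

noncomputable section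

/-- `T_ℓ^+`: strictly increasing integer sequences indexed by `j ≤ ℓ` with `i_j = j`
for `j ≪ 0`. -/
def TPlus (ℓ : ℤ) : Set (Set.Iic ℓ → ℤ) :=
  {f | StrictMono f ∧ ∃ N : ℤ, ∀ j : Set.Iic ℓ, (j : ℤ) ≤ N → f j = (j : ℤ)}

/-- `T_0^-`: strictly increasing integer sequences indexed by `p ≥ 1` with `j_p = p`
for `p ≫ 0`. -/
def TMinus : Set (Set.Ici (1 : ℤ) → ℤ) :=
  {g | StrictMono g ∧ ∃ N : ℤ, ∀ p : Set.Ici (1 : ℤ), N ≤ (p : ℤ) → g p = (p : ℤ)}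

/-- `α_T = sup {p ≤ ℓ : i_p = p}`. -/
def alphaT (ℓ : ℤ) (f : Set.Iic ℓ → ℤ) : ℤ :=
  sSup {p : ℤ | ∃ h : p ≤ ℓ, f ⟨p, h⟩ = p}

/-- `β_{T'} = inf {p ≥ 1 : j_p = p}`. -/
def betaT (g : Set.Ici (1 : ℤ) → ℤ) : ℤ :=
  sInf {p : ℤ | ∃ h : (1 : ℤ) ≤ p, g ⟨p, h⟩ = p}

/-- `T_ℓ`: pairs `T ⊗ T'` with `T ∈ T_ℓ^+`, `T' ∈ T_0^-` and `α_T ≥ β_{T'} − 1`. -/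
def TL (ℓ : ℤ) : Set ((Set.Iic ℓ → ℤ) × (Set.Ici (1 : ℤ) → ℤ)) :=
  {x | x.1 ∈ TPlus ℓ ∧ x.2 ∈ TMinus ∧ betaT x.2 - 1 ≤ alphaT ℓ x.1}

/-- `T_{[1,ℓ]}`: strictly increasing `ℓ`-tuples of integers. -/
def TRect (ℓ : ℤ) : Set (Set.Icc (1 : ℤ) ℓ → ℤ) := {h | StrictMono h}

/-- The map `Π(T ⊗ T') = (j_1 < ⋯ < j_{α_T} < i_{α_T+1} < ⋯ < i_ℓ)`. -/
def PiMap (ℓ : ℤ) (x : (Set.Iic ℓ → ℤ) × (Set.Ici (1 : ℤ) → ℤ)) :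
    Set.Icc (1 : ℤ) ℓ → ℤ :=
  fun p => if (p : ℤ) ≤ alphaT ℓ x.1 then x.2 ⟨p, p.2.1⟩ else x.1 ⟨p, p.2.2⟩

/-! For a strictly increasing integer sequence `u`, the gaps `u q - u p` are at least `q - p`, i.e.
`p ↦ u p - p` is monotone. Hence `T ∈ T_ℓ^+` has `i_p ≥ p` with equality exactly for `p ≤ α_T`, and
`T' ∈ T_0^-` has `j_p ≤ p` with equality exactly for `p ≥ β_{T'}`. So `t = Π(T ⊗ T')` satisfies
`t_p ≤ p` exactly for `p ≤ α_T`: the cut point `α_T` can be read off `t`, and `T`, `T'` are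
recovered by filling in the identity outside the entries that `t` supplies. Applied to an
arbitrary strictly increasing `t`, cut after the last `p` with `t_p ≤ p`, the same recipe
produces a preimage. -/

open Set

theorem StrictMono.monotone_sub_coe {s : Set ℤ} [s.OrdConnected] {f : s → ℤ}
    (hf : StrictMono f) : Monotone fun x : s => f x - x := by
  rintro ⟨x, hx⟩ ⟨y, hy⟩ (hxy : x ≤ y)
  induction y, hxy using Int.leInduction with
  | base => exact le_rfl
  | succ n hn ih =>
    have hn' : n ∈ s := OrdConnected.out' hx hy ⟨hn, by omega⟩
    have hlt : f ⟨n, hn'⟩ < f ⟨n + 1, hy⟩ := hf (Subtype.mk_lt_mk.mpr (by omega))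
    have := ih hn'
    dsimp only at this ⊢
    omega

section TPlus

variable {ℓ : ℤ} {f : Iic ℓ → ℤ}

theorem TPlus.le_apply (hf : f ∈ TPlus ℓ) (j : Iic ℓ) : (j : ℤ) ≤ f j := by
  obtain ⟨hmono, N, hN⟩ := hf
  have hk : min N j ≤ ℓ := (min_le_right _ _).trans j.2
  have := hmono.monotone_sub_coe (show (⟨min N j, hk⟩ : Iic ℓ) ≤ j from min_le_right N (j : ℤ))
  have := hN ⟨min N j, hk⟩ (min_le_left _ _)
  dsimp only at *
  omega

theorem TPlus.alphaT_mem (hf : f ∈ TPlus ℓ) :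
    alphaT ℓ f ∈ {p : ℤ | ∃ h : p ≤ ℓ, f ⟨p, h⟩ = p} := by
  obtain ⟨-, N, hN⟩ := hf
  exact Int.csSup_mem ⟨min N ℓ, min_le_right _ _, hN _ (min_le_left _ _)⟩ ⟨ℓ, fun p hp => hp.1⟩

theorem TPlus.apply_eq_iff (hf : f ∈ TPlus ℓ) (j : Iic ℓ) : f j = j ↔ (j : ℤ) ≤ alphaT ℓ f := by
  obtain ⟨hαℓ, hα⟩ := TPlus.alphaT_mem hf
  refine ⟨fun h => le_csSup ⟨ℓ, fun p hp => hp.1⟩ ⟨j.2, h⟩, fun hj => ?_⟩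
  have := hf.1.monotone_sub_coe (show j ≤ ⟨alphaT ℓ f, hαℓ⟩ from hj)
  have := TPlus.le_apply hf j
  dsimp only at *
  omega

end TPlus

section TMinus

variable {g : Ici (1 : ℤ) → ℤ}

theorem TMinus.apply_le (hg : g ∈ TMinus) (p : Ici (1 : ℤ)) : g p ≤ p := by
  obtain ⟨hmono, N, hN⟩ := hg
  have hk : 1 ≤ max N p := p.2.trans (le_max_right _ _)
  have := hmono.monotone_sub_coe (show p ≤ (⟨max N p, hk⟩ : Ici (1 : ℤ)) from le_max_right N (p : ℤ))
  have := hN ⟨max N p, hk⟩ (le_max_left _ _)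
  dsimp only at *
  omega

theorem TMinus.betaT_mem (hg : g ∈ TMinus) :
    betaT g ∈ {p : ℤ | ∃ h : 1 ≤ p, g ⟨p, h⟩ = p} := by
  obtain ⟨-, N, hN⟩ := hg
  exact Int.csInf_mem ⟨max N 1, le_max_right _ _, hN _ (le_max_left _ _)⟩ ⟨1, fun p hp => hp.1⟩

theorem TMinus.apply_eq_iff (hg : g ∈ TMinus) (p : Ici (1 : ℤ)) : g p = p ↔ betaT g ≤ p := by
  obtain ⟨hβ1, hβ⟩ := TMinus.betaT_mem hg
  refine ⟨fun h => csInf_le ⟨1, fun p hp => hp.1⟩ ⟨p.2, h⟩, fun hp => ?_⟩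
  have := hg.1.monotone_sub_coe (show ⟨betaT g, hβ1⟩ ≤ p from hp)
  have := TMinus.apply_le hg p
  dsimp only at *
  omega

end TMinus

def IsCutPoint (ℓ a : ℤ) (h : Icc (1 : ℤ) ℓ → ℤ) : Prop :=
  0 ≤ a ∧ a ≤ ℓ ∧ ∀ p : Icc (1 : ℤ) ℓ, h p ≤ p ↔ (p : ℤ) ≤ a

theorem IsCutPoint.unique {ℓ a b : ℤ} {h : Icc (1 : ℤ) ℓ → ℤ} (ha : IsCutPoint ℓ a h)
    (hb : IsCutPoint ℓ b h) : a = b := by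
  obtain ⟨ha0, haℓ, hpa⟩ := ha
  obtain ⟨hb0, hbℓ, hpb⟩ := hb
  by_contra hne
  have hp : min a b + 1 ∈ Icc (1 : ℤ) ℓ := ⟨by omega, by omega⟩
  have := hpa ⟨_, hp⟩
  have := hpb ⟨_, hp⟩
  dsimp only at *
  omega

theorem exists_isCutPoint {ℓ : ℤ} (hℓ : 0 ≤ ℓ) {h : Icc (1 : ℤ) ℓ → ℤ} (hh : StrictMono h) :
    ∃ a, IsCutPoint ℓ a h := by
  obtain ⟨a, haP, hmax⟩ := Int.exists_greatest_of_bdd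
    (P := fun z => z = 0 ∨ ∃ hz : z ∈ Icc (1 : ℤ) ℓ, h ⟨z, hz⟩ ≤ z)
    ⟨ℓ, by rintro z (rfl | ⟨hz, -⟩) <;> [exact hℓ; exact hz.2]⟩ ⟨0, Or.inl rfl⟩
  refine ⟨a, hmax 0 (Or.inl rfl), ?_, fun p => ⟨fun hp => hmax p (Or.inr ⟨p.2, hp⟩), fun hpa => ?_⟩⟩
  · rcases haP with rfl | ⟨ha, -⟩
    exacts [hℓ, ha.2]
  · rcases haP with rfl | ⟨ha, hha⟩
    · exact absurd p.2.1 (by omega)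
    · have := hh.monotone_sub_coe (show p ≤ ⟨a, ha⟩ from hpa)
      dsimp only at this
      omega

/-- The inverse of `Π` at cut point `a`. The guard `1 ≤ j` only makes `h` applicable: for
`0 ≤ a` it follows from `a < j`. -/
def PiInv (ℓ a : ℤ) (h : Icc (1 : ℤ) ℓ → ℤ) : (Iic ℓ → ℤ) × (Ici (1 : ℤ) → ℤ) :=
  (fun j => if hj : 1 ≤ (j : ℤ) ∧ a < j then h ⟨j, hj.1, j.2⟩ else j,
   fun p => if hp : (p : ℤ) ≤ a ∧ (p : ℤ) ≤ ℓ then h ⟨p, p.2, hp.2⟩ else p)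

section PiInv

variable {ℓ a : ℤ} {h : Icc (1 : ℤ) ℓ → ℤ}

theorem PiInv_fst_of_le (j : Iic ℓ) (hj : (j : ℤ) ≤ a) : (PiInv ℓ a h).1 j = j := by
  simp [PiInv, hj]

theorem PiInv_fst_of_lt (ha0 : 0 ≤ a) (j : Iic ℓ) (hj : a < j) :
    (PiInv ℓ a h).1 j = h ⟨j, by omega, j.2⟩ :=
  dif_pos ⟨by omega, hj⟩

theorem PiInv_snd_of_le (haℓ : a ≤ ℓ) (p : Ici (1 : ℤ)) (hp : (p : ℤ) ≤ a) :
    (PiInv ℓ a h).2 p = h ⟨p, p.2, hp.trans haℓ⟩ :=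
  dif_pos ⟨hp, hp.trans haℓ⟩

theorem PiInv_snd_of_lt (p : Ici (1 : ℤ)) (hp : a < p) : (PiInv ℓ a h).2 p = p := by
  simp [PiInv, not_le.mpr hp]

theorem IsCutPoint.lt_apply (ha : IsCutPoint ℓ a h) (p : Icc (1 : ℤ) ℓ) (hp : a < p) :
    (p : ℤ) < h p :=
  lt_of_not_ge fun hle => (ha.2.2 p).1 hle |>.not_gt hp

theorem alphaT_PiInv_fst (ha : IsCutPoint ℓ a h) : alphaT ℓ (PiInv ℓ a h).1 = a := by
  refine IsGreatest.csSup_eq ⟨⟨ha.2.1, PiInv_fst_of_le _ le_rfl⟩, fun p ⟨hpℓ, e⟩ => ?_⟩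
  by_contra! hp
  have := ha.lt_apply ⟨p, by linarith [ha.1], hpℓ⟩ hp
  rw [PiInv_fst_of_lt ha.1 ⟨p, hpℓ⟩ hp] at e
  dsimp only at *
  omega

theorem strictMono_PiInv_fst (hh : StrictMono h) (ha : IsCutPoint ℓ a h) :
    StrictMono (PiInv ℓ a h).1 := by
  intro j k (hjk : (j : ℤ) < k)
  rcases le_or_gt (k : ℤ) a with hk | hk
  · rw [PiInv_fst_of_le j (by omega), PiInv_fst_of_le k hk]
    exact hjk
  rw [PiInv_fst_of_lt ha.1 k hk]
  rcases le_or_gt (j : ℤ) a with hj | hj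
  · rw [PiInv_fst_of_le j hj]
    have := ha.lt_apply ⟨k, by linarith [ha.1], k.2⟩ hk
    dsimp only at this
    omega
  · rw [PiInv_fst_of_lt ha.1 j hj]
    exact hh (Subtype.mk_lt_mk.mpr hjk)

theorem strictMono_PiInv_snd (hh : StrictMono h) (ha : IsCutPoint ℓ a h) :
    StrictMono (PiInv ℓ a h).2 := by
  intro p q (hpq : (p : ℤ) < q)
  rcases lt_or_ge a p with hp | hp
  · rw [PiInv_snd_of_lt p hp, PiInv_snd_of_lt q (by omega)]
    exact hpq
  rw [PiInv_snd_of_le ha.2.1 p hp]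
  rcases lt_or_ge a q with hq | hq
  · rw [PiInv_snd_of_lt q hq]
    have := (ha.2.2 ⟨p, p.2, hp.trans ha.2.1⟩).2 hp
    dsimp only at this
    omega
  · rw [PiInv_snd_of_le ha.2.1 q hq]
    exact hh (Subtype.mk_lt_mk.mpr hpq)

theorem PiInv_mem_TL (hh : StrictMono h) (ha : IsCutPoint ℓ a h) : PiInv ℓ a h ∈ TL ℓ := by
  refine ⟨⟨strictMono_PiInv_fst hh ha, a, PiInv_fst_of_le⟩,
    ⟨strictMono_PiInv_snd hh ha, a + 1, fun p hp => PiInv_snd_of_lt p (by omega)⟩, ?_⟩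
  have hβ : betaT (PiInv ℓ a h).2 ≤ a + 1 :=
    csInf_le ⟨1, fun p hp => hp.1⟩ ⟨by linarith [ha.1], PiInv_snd_of_lt ⟨a + 1, _⟩ (lt_add_one a)⟩
  rw [alphaT_PiInv_fst ha]
  omega

theorem PiMap_PiInv (ha : IsCutPoint ℓ a h) : PiMap ℓ (PiInv ℓ a h) = h := by
  funext p
  simp only [PiMap, alphaT_PiInv_fst ha]
  split_ifs with hp
  · exact PiInv_snd_of_le ha.2.1 ⟨p, p.2.1⟩ hp
  · exact PiInv_fst_of_lt ha.1 ⟨p, p.2.2⟩ (not_le.mp hp)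

end PiInv

theorem mapsTo_PiMap (ℓ : ℤ) : MapsTo (PiMap ℓ) (TL ℓ) (TRect ℓ) := by
  rintro ⟨f, g⟩ ⟨hf, hg, -⟩ p q (hpq : (p : ℤ) < q)
  simp only [PiMap]
  by_cases hq : (q : ℤ) ≤ alphaT ℓ f
  · rw [if_pos (hpq.le.trans hq), if_pos hq]
    exact hg.1 (Subtype.mk_lt_mk.mpr hpq)
  rw [if_neg hq]
  by_cases hp : (p : ℤ) ≤ alphaT ℓ f
  · rw [if_pos hp]
    have := TMinus.apply_le hg ⟨p, p.2.1⟩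
    have := TPlus.le_apply hf ⟨q, q.2.2⟩
    dsimp only at *
    omega
  · rw [if_neg hp]
    exact hf.1 (Subtype.mk_lt_mk.mpr hpq)

section PiMap

variable {ℓ : ℤ} {x : (Iic ℓ → ℤ) × (Ici (1 : ℤ) → ℤ)}

theorem isCutPoint_PiMap (hx : x ∈ TL ℓ) : IsCutPoint ℓ (alphaT ℓ x.1) (PiMap ℓ x) := by
  obtain ⟨hf, hg, hβα⟩ := hx
  refine ⟨by linarith [(TMinus.betaT_mem hg).1], (TPlus.alphaT_mem hf).1, fun p => ?_⟩
  simp only [PiMap]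
  by_cases hp : (p : ℤ) ≤ alphaT ℓ x.1
  · simpa only [hp, ↓reduceIte, iff_true] using TMinus.apply_le hg ⟨p, p.2.1⟩
  · have hfp := TPlus.le_apply hf ⟨p, p.2.2⟩
    have hfix := TPlus.apply_eq_iff hf ⟨p, p.2.2⟩
    simp only [hp, ↓reduceIte, iff_false] at hfix ⊢
    dsimp only at hfp
    omega

theorem PiInv_PiMap (hx : x ∈ TL ℓ) : PiInv ℓ (alphaT ℓ x.1) (PiMap ℓ x) = x := by
  obtain ⟨hf, hg, hβα⟩ := hx
  ext j
  · have := TPlus.apply_eq_iff hf j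
    by_cases hj : (j : ℤ) ≤ alphaT ℓ x.1
    · simp [PiInv, hj, this.2 hj]
    · have hj1 : 1 ≤ (j : ℤ) := by linarith [(TMinus.betaT_mem hg).1]
      simp [PiInv, PiMap, hj, hj1, lt_of_not_ge hj]
  · have := TMinus.apply_eq_iff hg j
    by_cases hj : (j : ℤ) ≤ alphaT ℓ x.1
    · simp [PiInv, PiMap, hj, hj.trans (TPlus.alphaT_mem hf).1]
    · simp [PiInv, hj, this.2 (by omega)]

end PiMap

/-- The map `Π : T_ℓ → T_{[1,ℓ]}` is a bijection. -/
theorem PiMap_bijective (ℓ : ℤ) (hl : 1 ≤ ℓ) :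
    Set.BijOn (PiMap ℓ) (TL ℓ) (TRect ℓ) := by
  refine ⟨mapsTo_PiMap ℓ, fun x hx y hy hxy => ?_, fun h hh => ?_⟩
  · have hα : alphaT ℓ x.1 = alphaT ℓ y.1 :=
      (isCutPoint_PiMap hx).unique (hxy ▸ isCutPoint_PiMap hy)
    rw [← PiInv_PiMap hx, ← PiInv_PiMap hy, hxy, hα]
  · obtain ⟨a, ha⟩ := exists_isCutPoint (by omega) hh
    exact ⟨PiInv ℓ a h, PiInv_mem_TL hh ha, PiMap_PiInv ha⟩
end
end

section
/- Let T' ∈ T_0^- with entries (j_p)_{p ≥ 1} and β_{T'} = inf{p ≥ 1 : j_p = p}. If for some integer i the Kashiwara operator ẽ_i acts nontrivially on T' (replacing an entry i+1 by i), then β_{ẽ_i·T'} = β_{T'} if i < β_{T'} - 1, and β_{ẽ_i·T'} = β_{T'} + 1 if i = β_{T'} - 1. -/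
attribute [local instance] Classical.propDecidable

noncomputable section

/-- The Kashiwara operator `ẽ_i` on a sequence: replace the entry `i+1` by `i`. -/
def eMod {γ : Type*} (i : ℤ) (f : γ → ℤ) : γ → ℤ :=
  fun j => if f j = i + 1 then i else f j

/-!
For a strictly increasing integer sequence the defect `p ↦ j_p - p` is nondecreasing; as it
vanishes for `p ≫ 0`, we get `j_p ≤ p` everywhere, with equality exactly for `p ≥ β_{T'}`.
Hence `ẽ_i` creates no new fixed point (the entry `i + 1` sits at a position `≥ i + 1`) and
destroys only the one at position `i + 1`: the fixed points of `ẽ_i T'` are the `p ≥ β_{T'}`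
with `p ≠ i + 1`.
-/

theorem StrictMono.monotone_sub_val {s : Set ℤ} [s.OrdConnected] {g : s → ℤ}
    (hg : StrictMono g) : Monotone fun p => g p - p := by
  refine monotone_of_le_succ fun p hp => ?_
  have hmem : Order.succ (p : ℤ) ∈ s := by_contra (hp ∘ isMax_of_succ_notMem)
  have hsucc : ((Order.succ p : s) : ℤ) = p + 1 := by
    rw [coe_succ_of_mem hmem, Order.succ_eq_add_one]
  have := hg (Order.lt_succ_of_not_isMax hp)
  omega

theorem betaT_eq_of_forall_apply_eq_self_iff {f : Set.Ici (1 : ℤ) → ℤ} {b : ℤ}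
    (hb : 1 ≤ b) (hf : ∀ p : Set.Ici (1 : ℤ), f p = p ↔ b ≤ p) : betaT f = b :=
  IsLeast.csInf_eq ⟨⟨hb, (hf _).2 le_rfl⟩, fun _ ⟨hp, hfp⟩ => (hf ⟨_, hp⟩).1 hfp⟩

theorem eMod_apply_eq_iff {γ : Type*} {i n : ℤ} {f : γ → ℤ} {x : γ} (hx : f x ≤ n) :
    eMod i f x = n ↔ f x = n ∧ n ≠ i + 1 := by
  unfold eMod
  split_ifs <;> omega

section TMinus

variable {g : Set.Ici (1 : ℤ) → ℤ}

theorem apply_le_of_mem_TMinus (hg : g ∈ TMinus) (p : Set.Ici (1 : ℤ)) : g p ≤ p := by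
  obtain ⟨hmono, N, hN⟩ := hg
  let q : Set.Ici (1 : ℤ) := ⟨max p N, Set.mem_Ici.2 (p.2.trans (le_max_left _ _))⟩
  have hpq : g p - p ≤ g q - q :=
    hmono.monotone_sub_val (show p ≤ q from le_max_left (p : ℤ) N)
  have hq : g q = q := hN q (le_max_right _ _)
  omega

theorem exists_apply_betaT_eq_of_forall_ge_apply_eq
    (hg : ∃ N : ℤ, ∀ p : Set.Ici (1 : ℤ), N ≤ (p : ℤ) → g p = p) :
    ∃ h : 1 ≤ betaT g, g ⟨betaT g, h⟩ = betaT g := by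
  obtain ⟨N, hN⟩ := hg
  have hN' : g ⟨max 1 N, Set.mem_Ici.2 (le_max_left _ _)⟩ = max 1 N := hN _ (le_max_right _ _)
  exact Int.csInf_mem (s := {p : ℤ | ∃ h : 1 ≤ p, g ⟨p, h⟩ = p}) ⟨_, _, hN'⟩
    ⟨1, fun _ ⟨h, _⟩ => h⟩

theorem apply_eq_self_iff_betaT_le (hg : g ∈ TMinus) (p : Set.Ici (1 : ℤ)) :
    g p = p ↔ betaT g ≤ p := by
  refine ⟨fun h => csInf_le ⟨1, fun _ ⟨h, _⟩ => h⟩ ⟨p.2, h⟩, fun h => ?_⟩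
  obtain ⟨hβ, hgβ⟩ := exists_apply_betaT_eq_of_forall_ge_apply_eq hg.2
  have hβp : g ⟨betaT g, hβ⟩ - betaT g ≤ g p - p :=
    hg.1.monotone_sub_val (show ⟨_, hβ⟩ ≤ p from h)
  have := apply_le_of_mem_TMinus hg p
  omega

end TMinus

theorem eTilde_beta_general (i : ℤ) (g : Set.Ici (1 : ℤ) → ℤ) (hg : g ∈ TMinus) :
    (i < betaT g - 1 → betaT (eMod i g) = betaT g) ∧
    (i = betaT g - 1 → betaT (eMod i g) = betaT g + 1) := by
  obtain ⟨hβ, -⟩ := exists_apply_betaT_eq_of_forall_ge_apply_eq hg.2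
  have hfix (p : Set.Ici (1 : ℤ)) : eMod i g p = p ↔ betaT g ≤ p ∧ (p : ℤ) ≠ i + 1 := by
    rw [eMod_apply_eq_iff (apply_le_of_mem_TMinus hg p), apply_eq_self_iff_betaT_le hg]
  constructor
  · intro hi
    refine betaT_eq_of_forall_apply_eq_self_iff hβ fun p => ?_
    rw [hfix]
    omega
  · intro hi
    refine betaT_eq_of_forall_apply_eq_self_iff (by omega) fun p => ?_
    rw [hfix]
    omega

/-- Let `T' ∈ T_0^-` with `β_{T'} = inf {p ≥ 1 : j_p = p}`.  If the Kashiwara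
operator `ẽ_i` acts nontrivially on `T'` (i.e. `i+1` occurs among the entries and
`i` does not), then `β_{ẽ_i·T'} = β_{T'}` if `i < β_{T'} − 1`, and
`β_{ẽ_i·T'} = β_{T'} + 1` if `i = β_{T'} − 1`. -/
theorem eTilde_beta (i : ℤ) (g : Set.Ici (1 : ℤ) → ℤ) (hg : g ∈ TMinus)
    (hocc : ∃ p : Set.Ici (1 : ℤ), g p = i + 1)
    (hnocc : ∀ p : Set.Ici (1 : ℤ), g p ≠ i) :
    (i < betaT g - 1 → betaT (eMod i g) = betaT g) ∧
    (i = betaT g - 1 → betaT (eMod i g) = betaT g + 1) :=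
  eTilde_beta_general i g hg
end
end

section
/- The set T_ℓ = {(T, T') ∈ T_ℓ^+ × T_0^- : α_T ≥ β_{T'} - 1} is closed under the Kashiwara crystal operators ẽ_i and f̃_i (with the tensor product rule): for every (T, T') ∈ T_ℓ and every i ∈ ℤ, the result of applying ẽ_i (or f̃_i) to T ⊗ T' via the tensor product rule is either 0 or again an element of T_ℓ. -/
/-!
Strict monotonicity together with `i_j = j` for `j ≪ 0` forces `i_p ≥ p`, with equality exactly
for `p ≤ α_T`; dually `j_p ≤ p`, with equality exactly for `p ≥ β_{T'}`. Hence `T` contains `α_T`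
but not `α_T + 1`, and `T'` contains `β_{T'}` but not `β_{T'} - 1`. A crystal operator moves one
entry by one, so it keeps every fixed point except possibly `α_T` (an `f̃_i` on `T` with
`i = α_T`) or `β_{T'}` (an `ẽ_i` on `T'` with `i + 1 = β_{T'}`); in those cases the neighbouring
index stays fixed, and the tensor product rule sends the operator to that factor only when
`α_T ≥ β_{T'}`, which leaves room for the shift by one.
-/

attribute [local instance] Classical.propDecidable

noncomputable section

/-- `ẽ_i` is applicable to a column: `i+1` occurs among the entries and `i` does not. -/
def eApp {γ : Type*} (i : ℤ) (f : γ → ℤ) : Prop :=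
  (∃ p, f p = i + 1) ∧ ∀ p, f p ≠ i

/-- `f̃_i` is applicable to a column: `i` occurs among the entries and `i+1` does not. -/
def fApp {γ : Type*} (i : ℤ) (f : γ → ℤ) : Prop :=
  (∃ p, f p = i) ∧ ∀ p, f p ≠ i + 1

/-- Replace the entry `i` by `i+1`. -/
def fMod {γ : Type*} (i : ℤ) (f : γ → ℤ) : γ → ℤ :=
  fun j => if f j = i then i + 1 else f j

/-- The Kashiwara operator `ẽ_i` on a column crystal, with value `none` for `0`. -/
def eCol {γ : Type*} (i : ℤ) (f : γ → ℤ) : Option (γ → ℤ) :=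
  if eApp i f then some (eMod i f) else none

/-- The Kashiwara operator `f̃_i` on a column crystal, with value `none` for `0`. -/
def fCol {γ : Type*} (i : ℤ) (f : γ → ℤ) : Option (γ → ℤ) :=
  if fApp i f then some (fMod i f) else none

/-- Kashiwara's tensor product rule for `ẽ_i` on `T ⊗ T'` (here `ε_i, φ_i ∈ {0,1}`
on each factor): `ẽ_i (b₁ ⊗ b₂) = ẽ_i b₁ ⊗ b₂` if `φ_i(b₁) ≥ ε_i(b₂)`, and
`b₁ ⊗ ẽ_i b₂` otherwise. -/
def eTen (ℓ : ℤ) (i : ℤ) (x : (Set.Iic ℓ → ℤ) × (Set.Ici (1 : ℤ) → ℤ)) :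
    Option ((Set.Iic ℓ → ℤ) × (Set.Ici (1 : ℤ) → ℤ)) :=
  if fApp i x.1 ∨ ¬ eApp i x.2 then
    (if eApp i x.1 then some (eMod i x.1, x.2) else none)
  else some (x.1, eMod i x.2)

/-- Kashiwara's tensor product rule for `f̃_i` on `T ⊗ T'`:
`f̃_i (b₁ ⊗ b₂) = f̃_i b₁ ⊗ b₂` if `φ_i(b₁) > ε_i(b₂)`, and `b₁ ⊗ f̃_i b₂` otherwise. -/
def fTen (ℓ : ℤ) (i : ℤ) (x : (Set.Iic ℓ → ℤ) × (Set.Ici (1 : ℤ) → ℤ)) :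
    Option ((Set.Iic ℓ → ℤ) × (Set.Ici (1 : ℤ) → ℤ)) :=
  if fApp i x.1 ∧ ¬ eApp i x.2 then some (fMod i x.1, x.2)
  else (if fApp i x.2 then some (x.1, fMod i x.2) else none)

lemma StrictMono.sub_le_sub_of_ordConnected {S : Set ℤ} [S.OrdConnected] {f : S → ℤ}
    (hf : StrictMono f) {a b : S} (hab : a ≤ b) : (b : ℤ) - a ≤ f b - f a := by
  suffices h : ∀ n, (a : ℤ) ≤ n → ∀ hn : n ∈ S, n - a ≤ f ⟨n, hn⟩ - f a from h b hab b.2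
  refine Int.leInduction (fun _ => by simp) fun n han ih hn => ?_
  have hnS : n ∈ S := Set.OrdConnected.out ‹_› a.2 hn ⟨han, by omega⟩
  have hlt : f ⟨n, hnS⟩ < f ⟨n + 1, hn⟩ := hf (Subtype.mk_lt_mk.2 (by omega))
  have := ih hnS
  omega

lemma le_alphaT {ℓ : ℤ} {f : Set.Iic ℓ → ℤ} {p : Set.Iic ℓ} (hp : f p = p) :
    (p : ℤ) ≤ alphaT ℓ f :=
  le_csSup ⟨ℓ, fun _ hq => hq.1⟩ ⟨p.2, hp⟩

lemma betaT_le {g : Set.Ici (1 : ℤ) → ℤ} {p : Set.Ici (1 : ℤ)} (hp : g p = p) :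
    betaT g ≤ p :=
  csInf_le ⟨1, fun _ hq => hq.1⟩ ⟨p.2, hp⟩

namespace TPlus

variable {ℓ : ℤ} {f : Set.Iic ℓ → ℤ}

lemma le_apply_s7 (hf : f ∈ TPlus ℓ) (p : Set.Iic ℓ) : (p : ℤ) ≤ f p := by
  obtain ⟨hm, N, hN⟩ := hf
  let q : Set.Iic ℓ := ⟨min N p, Set.mem_Iic.2 (min_le_of_right_le p.2)⟩
  have hq : f q = q := hN q (min_le_left _ _)
  have := hm.sub_le_sub_of_ordConnected (show q ≤ p from min_le_right N (p : ℤ))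
  omega

lemma alphaT_mem_s7 (hf : f ∈ TPlus ℓ) : alphaT ℓ f ∈ {p : ℤ | ∃ h : p ≤ ℓ, f ⟨p, h⟩ = p} := by
  obtain ⟨-, N, hN⟩ := hf
  exact Int.csSup_mem
    ⟨min N ℓ, min_le_right _ _, hN ⟨_, Set.mem_Iic.2 (min_le_right _ _)⟩ (min_le_left _ _)⟩
    ⟨ℓ, fun _ hq => hq.1⟩

lemma alphaT_le (hf : f ∈ TPlus ℓ) : alphaT ℓ f ≤ ℓ :=
  (alphaT_mem_s7 hf).1

lemma apply_eq_self_iff (hf : f ∈ TPlus ℓ) {p : Set.Iic ℓ} : f p = p ↔ (p : ℤ) ≤ alphaT ℓ f := by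
  refine ⟨le_alphaT, fun hp => ?_⟩
  obtain ⟨hα, hfα⟩ := alphaT_mem_s7 hf
  have hgap := hf.1.sub_le_sub_of_ordConnected (show p ≤ ⟨alphaT ℓ f, hα⟩ from hp)
  have := le_apply_s7 hf p
  simp only at hgap hfα
  omega

lemma apply_of_le_alphaT (hf : f ∈ TPlus ℓ) {p : ℤ} (hp : p ≤ alphaT ℓ f) :
    f ⟨p, hp.trans (alphaT_le hf)⟩ = p :=
  (apply_eq_self_iff hf).2 hp

lemma fApp_alphaT (hf : f ∈ TPlus ℓ) : fApp (alphaT ℓ f) f := by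
  refine ⟨⟨⟨alphaT ℓ f, alphaT_le hf⟩, (apply_eq_self_iff hf).2 le_rfl⟩, fun p hp => ?_⟩
  have := le_apply_s7 hf p
  have := apply_eq_self_iff (p := p) hf
  omega

end TPlus

namespace TMinus

variable {g : Set.Ici (1 : ℤ) → ℤ}

lemma apply_le_s7 (hg : g ∈ TMinus) (p : Set.Ici (1 : ℤ)) : g p ≤ p := by
  obtain ⟨hm, N, hN⟩ := hg
  let q : Set.Ici (1 : ℤ) := ⟨max N p, Set.mem_Ici.2 (le_max_of_le_right p.2)⟩
  have hq : g q = q := hN q (le_max_left _ _)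
  have := hm.sub_le_sub_of_ordConnected (show p ≤ q from le_max_right N (p : ℤ))
  omega

lemma betaT_mem_s7 (hg : g ∈ TMinus) : betaT g ∈ {p : ℤ | ∃ h : 1 ≤ p, g ⟨p, h⟩ = p} := by
  obtain ⟨-, N, hN⟩ := hg
  exact Int.csInf_mem
    ⟨max N 1, le_max_right _ _, hN ⟨_, Set.mem_Ici.2 (le_max_right _ _)⟩ (le_max_left _ _)⟩
    ⟨1, fun _ hq => hq.1⟩

lemma one_le_betaT (hg : g ∈ TMinus) : 1 ≤ betaT g :=
  (betaT_mem_s7 hg).1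

lemma apply_eq_self_iff (hg : g ∈ TMinus) {p : Set.Ici (1 : ℤ)} : g p = p ↔ betaT g ≤ p := by
  refine ⟨betaT_le, fun hp => ?_⟩
  obtain ⟨hβ, hgβ⟩ := betaT_mem_s7 hg
  have hgap := hg.1.sub_le_sub_of_ordConnected (show ⟨betaT g, hβ⟩ ≤ p from hp)
  have := apply_le_s7 hg p
  simp only at hgap hgβ
  omega

lemma apply_of_betaT_le (hg : g ∈ TMinus) {p : ℤ} (hp : betaT g ≤ p) :
    g ⟨p, (one_le_betaT hg).trans hp⟩ = p :=
  (apply_eq_self_iff hg).2 hp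

lemma eApp_betaT_sub_one (hg : g ∈ TMinus) : eApp (betaT g - 1) g := by
  refine ⟨⟨⟨betaT g, one_le_betaT hg⟩, by simp [apply_eq_self_iff hg]⟩, fun p hp => ?_⟩
  have := apply_le_s7 hg p
  have := apply_eq_self_iff (p := p) hg
  omega

end TMinus

section Modify

variable {γ : Type*} {i : ℤ} {f : γ → ℤ} {p : γ}

lemma eMod_apply_of_ne (h : f p ≠ i + 1) : eMod i f p = f p :=
  if_neg h

lemma fMod_apply_of_ne (h : f p ≠ i) : fMod i f p = f p :=
  if_neg h

lemma StrictMono.eMod [Preorder γ] (hf : StrictMono f) (h : ∀ p, f p ≠ i) :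
    StrictMono (eMod i f) := by
  intro a b hab
  have := hf hab
  have := h a
  have := h b
  unfold _root_.eMod
  split_ifs <;> omega

lemma StrictMono.fMod [Preorder γ] (hf : StrictMono f) (h : ∀ p, f p ≠ i + 1) :
    StrictMono (fMod i f) := by
  intro a b hab
  have := hf hab
  have := h a
  have := h b
  unfold _root_.fMod
  split_ifs <;> omega

end Modify

section TL

variable {ℓ i : ℤ} {f : Set.Iic ℓ → ℤ} {g : Set.Ici (1 : ℤ) → ℤ}

lemma eMod_mem_TPlus (hf : f ∈ TPlus ℓ) (h : ∀ p, f p ≠ i) : eMod i f ∈ TPlus ℓ := by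
  obtain ⟨hm, N, hN⟩ := hf
  refine ⟨hm.eMod h, min N i, fun j hj => ?_⟩
  have := hN j (by omega)
  rw [eMod_apply_of_ne (by omega), this]

lemma fMod_mem_TPlus (hf : f ∈ TPlus ℓ) (h : ∀ p, f p ≠ i + 1) : fMod i f ∈ TPlus ℓ := by
  obtain ⟨hm, N, hN⟩ := hf
  refine ⟨hm.fMod h, min N (i - 1), fun j hj => ?_⟩
  have := hN j (by omega)
  rw [fMod_apply_of_ne (by omega), this]

lemma eMod_mem_TMinus (hg : g ∈ TMinus) (h : ∀ p, g p ≠ i) : eMod i g ∈ TMinus := by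
  obtain ⟨hm, N, hN⟩ := hg
  refine ⟨hm.eMod h, max N (i + 2), fun j hj => ?_⟩
  have := hN j (by omega)
  rw [eMod_apply_of_ne (by omega), this]

lemma fMod_mem_TMinus (hg : g ∈ TMinus) (h : ∀ p, g p ≠ i + 1) : fMod i g ∈ TMinus := by
  obtain ⟨hm, N, hN⟩ := hg
  refine ⟨hm.fMod h, max N (i + 1), fun j hj => ?_⟩
  have := hN j (by omega)
  rw [fMod_apply_of_ne (by omega), this]

lemma eMod_fst_mem_TL (hx : (f, g) ∈ TL ℓ) (hi : ∀ p, f p ≠ i) : (eMod i f, g) ∈ TL ℓ := by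
  obtain ⟨hf, hg, hβα⟩ : f ∈ TPlus ℓ ∧ g ∈ TMinus ∧ betaT g - 1 ≤ alphaT ℓ f := hx
  have hα : alphaT ℓ f ≠ i + 1 := fun h =>
    hi _ ((TPlus.apply_of_le_alphaT hf (sub_le_self _ zero_le_one)).trans (by omega))
  have hfix := TPlus.apply_of_le_alphaT hf le_rfl
  have : alphaT ℓ f ≤ alphaT ℓ (eMod i f) :=
    le_alphaT ((eMod_apply_of_ne (by rwa [hfix])).trans hfix)
  exact ⟨eMod_mem_TPlus hf hi, hg, hβα.trans this⟩

lemma fMod_fst_mem_TL (hx : (f, g) ∈ TL ℓ) (hi : ∀ p, f p ≠ i + 1) (hg' : ¬ eApp i g) :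
    (fMod i f, g) ∈ TL ℓ := by
  obtain ⟨hf, hg, hβα⟩ : f ∈ TPlus ℓ ∧ g ∈ TMinus ∧ betaT g - 1 ≤ alphaT ℓ f := hx
  refine ⟨fMod_mem_TPlus hf hi, hg, show betaT g - 1 ≤ alphaT ℓ (fMod i f) from ?_⟩
  by_cases hα : alphaT ℓ f = i
  · -- the fixed point `α` is lost, but the tensor rule chose `T` only because `β ≠ α + 1`
    have hβ : betaT g - 1 ≠ i := fun h => hg' (h ▸ TMinus.eApp_betaT_sub_one hg)
    have hfix := TPlus.apply_of_le_alphaT hf (sub_le_self (alphaT ℓ f) zero_le_one)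
    have : alphaT ℓ f - 1 ≤ alphaT ℓ (fMod i f) :=
      le_alphaT ((fMod_apply_of_ne (by rw [hfix]; omega)).trans hfix)
    omega
  · have hfix := TPlus.apply_of_le_alphaT hf le_rfl
    exact hβα.trans (le_alphaT ((fMod_apply_of_ne (by rwa [hfix])).trans hfix))

lemma eMod_snd_mem_TL (hx : (f, g) ∈ TL ℓ) (hf' : ¬ fApp i f) (hi : ∀ p, g p ≠ i) :
    (f, eMod i g) ∈ TL ℓ := by
  obtain ⟨hf, hg, hβα⟩ : f ∈ TPlus ℓ ∧ g ∈ TMinus ∧ betaT g - 1 ≤ alphaT ℓ f := hx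
  refine ⟨hf, eMod_mem_TMinus hg hi, show betaT (eMod i g) - 1 ≤ alphaT ℓ f from ?_⟩
  by_cases hβ : betaT g = i + 1
  · -- the fixed point `β` is lost, but the tensor rule chose `T'` only because `α ≠ β - 1`
    have hα : alphaT ℓ f ≠ i := fun h => hf' (h ▸ TPlus.fApp_alphaT hf)
    have hfix := TMinus.apply_of_betaT_le hg (le_add_of_nonneg_right zero_le_one)
    have : betaT (eMod i g) ≤ betaT g + 1 :=
      betaT_le ((eMod_apply_of_ne (by rw [hfix]; omega)).trans hfix)
    omega
  · have hfix := TMinus.apply_of_betaT_le hg le_rfl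
    have : betaT (eMod i g) ≤ betaT g :=
      betaT_le ((eMod_apply_of_ne (by rwa [hfix])).trans hfix)
    omega

lemma fMod_snd_mem_TL (hx : (f, g) ∈ TL ℓ) (hi : ∀ p, g p ≠ i + 1) :
    (f, fMod i g) ∈ TL ℓ := by
  obtain ⟨hf, hg, hβα⟩ : f ∈ TPlus ℓ ∧ g ∈ TMinus ∧ betaT g - 1 ≤ alphaT ℓ f := hx
  have hβ : betaT g ≠ i := fun h =>
    hi _ ((TMinus.apply_of_betaT_le hg (le_add_of_nonneg_right zero_le_one)).trans (by omega))
  have hfix := TMinus.apply_of_betaT_le hg le_rfl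
  have : betaT (fMod i g) ≤ betaT g :=
    betaT_le ((fMod_apply_of_ne (by rwa [hfix])).trans hfix)
  exact ⟨hf, fMod_mem_TMinus hg hi, show betaT (fMod i g) - 1 ≤ alphaT ℓ f by omega⟩

end TL

theorem TL_closed_under_crystal_ops_general (ℓ : ℤ) :
    ∀ x ∈ TL ℓ, ∀ i : ℤ, ∀ y,
      (eTen ℓ i x = some y → y ∈ TL ℓ) ∧ (fTen ℓ i x = some y → y ∈ TL ℓ) := by
  rintro ⟨f, g⟩ hx i y
  constructor
  · intro hy
    unfold eTen at hy
    split_ifs at hy with h₁ h₂ <;> cases hy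
    · exact eMod_fst_mem_TL hx h₂.2
    · push Not at h₁
      exact eMod_snd_mem_TL hx h₁.1 h₁.2.2
  · intro hy
    unfold fTen at hy
    split_ifs at hy with h₁ h₂ <;> cases hy
    · exact fMod_fst_mem_TL hx h₁.1.2 h₁.2
    · exact fMod_snd_mem_TL hx h₂.2

/-- The set `T_ℓ = {(T,T') : α_T ≥ β_{T'} − 1}` is closed under the Kashiwara
crystal operators `ẽ_i` and `f̃_i` given by the tensor product rule: applying
them to an element of `T_ℓ` gives either `0` or again an element of `T_ℓ`. -/
theorem TL_closed_under_crystal_ops (ℓ : ℤ) (hl : 1 ≤ ℓ) :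
    ∀ x ∈ TL ℓ, ∀ i : ℤ, ∀ y,
      (eTen ℓ i x = some y → y ∈ TL ℓ) ∧ (fTen ℓ i x = some y → y ∈ TL ℓ) :=
  TL_closed_under_crystal_ops_general ℓ
end
end

section
/- Fix ℓ, k ≥ 1 and let T^e be the ℓ×k tableau with T_{i,j} = i for all (i,j). In the crystal T_{[1,ℓ]×[1,k]} of semi-standard tableaux of rectangular shape ℓ×k, the Weyl-group orbit W·T^e consists exactly of the semi-standard tableaux T = (T_{i,j}) whose rows are constant, i.e. T_{i,1} = T_{i,2} = ⋯ = T_{i,k} for all 1 ≤ i ≤ ℓ. -/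
attribute [local instance] Classical.propDecidable

noncomputable section

/-- Column `c` of the tableau contributes a `+` to the `i`-signature: it contains
an entry `i` but no entry `i+1`. -/
def colPlus {ℓ k : ℕ} (i : ℤ) (T : Fin ℓ → Fin k → ℤ) (c : Fin k) : Prop :=
  (∃ r, T r c = i) ∧ ∀ r, T r c ≠ i + 1

/-- Column `c` of the tableau contributes a `−` to the `i`-signature: it contains
an entry `i+1` but no entry `i`. -/
def colMinus {ℓ k : ℕ} (i : ℤ) (T : Fin ℓ → Fin k → ℤ) (c : Fin k) : Prop :=
  (∃ r, T r c = i + 1) ∧ ∀ r, T r c ≠ i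

/-- Column `c` carries a `+` surviving the signature cancellation: every interval
to its right contains at least as many `+`'s as `−`'s. -/
def fCand {ℓ k : ℕ} (i : ℤ) (T : Fin ℓ → Fin k → ℤ) (c : Fin k) : Prop :=
  colPlus i T c ∧ ∀ c', c < c' →
    ((Finset.Ioc c c').filter (fun d => colMinus i T d)).card ≤
      ((Finset.Ioc c c').filter (fun d => colPlus i T d)).card

/-- Column `c` carries a `−` surviving the signature cancellation: every interval
to its left contains at least as many `−`'s as `+`'s. -/
def eCand {ℓ k : ℕ} (i : ℤ) (T : Fin ℓ → Fin k → ℤ) (c : Fin k) : Prop :=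
  colMinus i T c ∧ ∀ c', c' < c →
    ((Finset.Ico c' c).filter (fun d => colPlus i T d)).card ≤
      ((Finset.Ico c' c).filter (fun d => colMinus i T d)).card

/-- The Kashiwara operator `f̃_i` on rectangular tableaux via the signature rule:
change the entry `i` into `i+1` in the column carrying the leftmost surviving `+`;
`none` (i.e. `0`) if no `+` survives. -/
def fOp {ℓ k : ℕ} (i : ℤ) (T : Fin ℓ → Fin k → ℤ) : Option (Fin ℓ → Fin k → ℤ) :=
  if h : (Finset.univ.filter (fun c => fCand i T c)).Nonempty then
    some (fun r c =>
      if c = (Finset.univ.filter (fun c => fCand i T c)).min' h ∧ T r c = i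
      then i + 1 else T r c)
  else none

/-- The Kashiwara operator `ẽ_i` on rectangular tableaux via the signature rule:
change the entry `i+1` into `i` in the column carrying the rightmost surviving `−`;
`none` (i.e. `0`) if no `−` survives. -/
def eOp {ℓ k : ℕ} (i : ℤ) (T : Fin ℓ → Fin k → ℤ) : Option (Fin ℓ → Fin k → ℤ) :=
  if h : (Finset.univ.filter (fun c => eCand i T c)).Nonempty then
    some (fun r c =>
      if c = (Finset.univ.filter (fun c => eCand i T c)).max' h ∧ T r c = i + 1
      then i else T r c)
  else none

/-- The pairing `⟨wt(T), h_i⟩ = #{entries = i} − #{entries = i+1}`. -/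
def wtPair {ℓ k : ℕ} (i : ℤ) (T : Fin ℓ → Fin k → ℤ) : ℤ :=
  ((Finset.univ.filter (fun rc : Fin ℓ × Fin k => T rc.1 rc.2 = i)).card : ℤ) -
    ((Finset.univ.filter (fun rc : Fin ℓ × Fin k => T rc.1 rc.2 = i + 1)).card : ℤ)

/-- `k`-fold iteration of a partial operator. -/
def iterOpt {γ : Type*} (op : γ → Option γ) : ℕ → γ → Option γ
  | 0, x => some x
  | n + 1, x => (op x).bind (iterOpt op n)

/-- The string (extremal) operator
`S_i(T) = f̃_i^{⟨wt T, h_i⟩}(T)` if `⟨wt T, h_i⟩ ≥ 0`, else `ẽ_i^{−⟨wt T, h_i⟩}(T)`. -/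
def SOp {ℓ k : ℕ} (i : ℤ) (T : Fin ℓ → Fin k → ℤ) : Option (Fin ℓ → Fin k → ℤ) :=
  if 0 ≤ wtPair i T then iterOpt (fOp i) (wtPair i T).toNat T
  else iterOpt (eOp i) (-wtPair i T).toNat T

/-- The tableau `T^e` of shape `ℓ × k` with `T_{i,j} = i` for all `(i,j)`. -/
def Te (ℓ k : ℕ) : Fin ℓ → Fin k → ℤ := fun r _ => (r : ℤ) + 1

/-!
A tableau with constant rows is determined by its strictly increasing column
`a : Fin ℓ → ℤ`. On such a tableau `⟨wt, h_i⟩` is `k` times (`#{a = i} - #{a = i+1}`), so `S_i`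
is the identity unless exactly one of `i`, `i + 1` occurs in `a`, say in row `r`. In that case
the `i`-signature is `+⋯+` (or `−⋯−`), and the `k` applications of `f̃_i` (or `ẽ_i`) change
row `r` one column at a time, from left to right (or right to left), into the other value:
`S_i` moves the single entry `a r` by `±1`. Such moves preserve the constant-row shape, and
conversely they connect any two strictly increasing columns, because a row where two columns
first differ can always be moved towards the other one.
-/

theorem StrictMono.update_of_lt_of_lt {α β : Type*} [LinearOrder α] [DecidableEq α] [Preorder β]
    {a : α → β} (ha : StrictMono a) {r : α} {v : β} (hlt : ∀ s < r, a s < v)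
    (hgt : ∀ t, r < t → v < a t) : StrictMono (Function.update a r v) := by
  intro s t hst
  by_cases hs : s = r <;> by_cases ht : t = r
  · exact absurd hst (by rw [hs, ht]; exact lt_irrefl r)
  · simpa [hs, ht] using hgt t (hs ▸ hst)
  · simpa [hs, ht] using hlt s (ht ▸ hst)
  · simpa [hs, ht] using ha hst

namespace WeylOrbitTe

open Finset Function

variable {ℓ k : ℕ}

def constRowTab (k : ℕ) (a : Fin ℓ → ℤ) : Fin ℓ → Fin k → ℤ := fun r _ => a r

lemma constRowTab_iff_exists {T : Fin ℓ → Fin k → ℤ} :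
    ((∀ c : Fin k, StrictMono fun r => T r c) ∧ ∀ (r : Fin ℓ) (c c' : Fin k), T r c = T r c') ↔
      ∃ a, StrictMono a ∧ T = constRowTab k a := by
  constructor
  · rintro ⟨hcol, hrow⟩
    rcases k with _ | k
    · exact ⟨fun r => r, fun _ _ h => Nat.cast_lt.mpr h, by funext _ c; exact c.elim0⟩
    · exact ⟨fun r => T r 0, hcol 0, by funext r c; exact hrow r c 0⟩
  · rintro ⟨a, ha, rfl⟩
    exact ⟨fun _ => ha, fun _ _ _ => rfl⟩

lemma iterOpt_eq_of_step {γ : Type*} {op : γ → Option γ} :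
    ∀ {n : ℕ} {g : ℕ → γ}, (∀ m < n, op (g m) = some (g (m + 1))) →
      iterOpt op n (g 0) = some (g n)
  | 0, _, _ => rfl
  | n + 1, g, h => by
    rw [iterOpt, h 0 n.succ_pos, Option.bind_some]
    exact iterOpt_eq_of_step (g := fun m => g (m + 1)) fun m hm => h (m + 1) (by omega)

section Operators

variable {i : ℤ} {T : Fin ℓ → Fin k → ℤ}

lemma fOp_eq_of_isLeast {c₀ : Fin k} (h : IsLeast {c | fCand i T c} c₀) :
    fOp i T = some fun r c => if c = c₀ ∧ T r c = i then i + 1 else T r c := by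
  have hne : (univ.filter fun c => fCand i T c).Nonempty := ⟨c₀, by simpa using h.1⟩
  have hmin : (univ.filter fun c => fCand i T c).min' hne = c₀ :=
    le_antisymm (min'_le _ _ (by simpa using h.1))
      (h.2 (by simpa using min'_mem _ hne))
  rw [fOp, dif_pos hne, hmin]

lemma eOp_eq_of_isGreatest {c₀ : Fin k} (h : IsGreatest {c | eCand i T c} c₀) :
    eOp i T = some fun r c => if c = c₀ ∧ T r c = i + 1 then i else T r c := by
  have hne : (univ.filter fun c => eCand i T c).Nonempty := ⟨c₀, by simpa using h.1⟩
  have hmax : (univ.filter fun c => eCand i T c).max' hne = c₀ :=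
    le_antisymm (h.2 (by simpa using max'_mem _ hne))
      (le_max' _ _ (by simpa using h.1))
  rw [eOp, dif_pos hne, hmax]

lemma SOp_eq_self_of_wtPair_eq_zero (h : wtPair i T = 0) : SOp i T = some T := by
  rw [SOp, h]
  rfl

end Operators

lemma wtPair_constRowTab (i : ℤ) (a : Fin ℓ → ℤ) :
    wtPair i (constRowTab k a) = ((#{r | a r = i} : ℤ) - #{r | a r = i + 1}) * k := by
  have hcard : ∀ j : ℤ,
      #{rc : Fin ℓ × Fin k | constRowTab k a rc.1 rc.2 = j} = #{r | a r = j} * k := by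
    intro j
    conv_rhs => rw [← Fintype.card_fin k, ← card_univ, ← card_product]
    congr 1
    ext rc
    simp only [mem_product, mem_univ, and_true, mem_filter, true_and]
    rfl
  rw [wtPair, hcard, hcard]
  push_cast
  ring

section SplitRow

variable {i : ℤ} {a : Fin ℓ → ℤ} {r : Fin ℓ}

/-- The tableau `f̃_i^m (constRowTab k (update a r i))` of the `i`-string, for `m ≤ k`. -/
def splitRowTab (i : ℤ) (a : Fin ℓ → ℤ) (r : Fin ℓ) (m : ℕ) : Fin ℓ → Fin k → ℤ :=
  fun r' c => if r' = r then (if (c : ℕ) < m then i + 1 else i) else a r'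

lemma constRowTab_update_eq_splitRowTab_zero :
    constRowTab k (update a r i) = splitRowTab i a r 0 := by
  funext r' c
  by_cases hr : r' = r <;> simp [constRowTab, splitRowTab, hr]

lemma constRowTab_update_eq_splitRowTab_length :
    constRowTab k (update a r (i + 1)) = splitRowTab i a r k := by
  funext r' c
  by_cases hr : r' = r <;> simp [constRowTab, splitRowTab, hr]

variable (h : ∀ r' ≠ r, a r' ≠ i ∧ a r' ≠ i + 1)
include h

lemma splitRowTab_apply_eq_iff {m : ℕ} {r' : Fin ℓ} {c : Fin k} :
    splitRowTab i a r m r' c = i ↔ r' = r ∧ m ≤ (c : ℕ) := by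
  by_cases hr : r' = r
  · simp only [splitRowTab, hr, if_true, true_and]
    split_ifs <;> omega
  · simp [splitRowTab, hr, (h r' hr).1]

lemma splitRowTab_apply_eq_add_one_iff {m : ℕ} {r' : Fin ℓ} {c : Fin k} :
    splitRowTab i a r m r' c = i + 1 ↔ r' = r ∧ (c : ℕ) < m := by
  by_cases hr : r' = r
  · simp only [splitRowTab, hr, if_true, true_and]
    split_ifs <;> omega
  · simp [splitRowTab, hr, (h r' hr).2]

lemma colPlus_splitRowTab {m : ℕ} {c : Fin k} :
    colPlus i (splitRowTab i a r m) c ↔ m ≤ (c : ℕ) := by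
  simp only [colPlus, ne_eq, splitRowTab_apply_eq_iff h, splitRowTab_apply_eq_add_one_iff h]
  constructor
  · rintro ⟨⟨_, _, hc⟩, _⟩
    exact hc
  · intro hc
    exact ⟨⟨r, rfl, hc⟩, fun _ ⟨_, hc'⟩ => by omega⟩

lemma colMinus_splitRowTab {m : ℕ} {c : Fin k} :
    colMinus i (splitRowTab i a r m) c ↔ (c : ℕ) < m := by
  simp only [colMinus, ne_eq, splitRowTab_apply_eq_iff h, splitRowTab_apply_eq_add_one_iff h]
  constructor
  · rintro ⟨⟨_, _, hc⟩, _⟩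
    exact hc
  · intro hc
    exact ⟨⟨r, rfl, hc⟩, fun _ ⟨_, hc'⟩ => by omega⟩

lemma fCand_splitRowTab {m : ℕ} {c : Fin k} :
    fCand i (splitRowTab i a r m) c ↔ m ≤ (c : ℕ) := by
  refine ⟨fun hc => (colPlus_splitRowTab h).mp hc.1, fun hc => ⟨(colPlus_splitRowTab h).mpr hc, ?_⟩⟩
  intro c' _
  rw [filter_eq_empty_iff.mpr fun d hd => ?_, card_empty]
  · exact Nat.zero_le _
  rw [colMinus_splitRowTab h]
  have : c < d := (mem_Ioc.mp hd).1
  omega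

lemma eCand_splitRowTab {m : ℕ} {c : Fin k} :
    eCand i (splitRowTab i a r m) c ↔ (c : ℕ) < m := by
  refine ⟨fun hc => (colMinus_splitRowTab h).mp hc.1, fun hc => ⟨(colMinus_splitRowTab h).mpr hc, ?_⟩⟩
  intro c' _
  rw [filter_eq_empty_iff.mpr fun d hd => ?_, card_empty]
  · exact Nat.zero_le _
  rw [colPlus_splitRowTab h]
  have : d < c := (mem_Ico.mp hd).2
  omega

lemma fOp_splitRowTab {m : ℕ} (hm : m < k) :
    fOp i (splitRowTab (k := k) i a r m) = some (splitRowTab i a r (m + 1)) := by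
  have hleast : IsLeast {c | fCand i (splitRowTab i a r m) c} ⟨m, hm⟩ :=
    ⟨(fCand_splitRowTab h).mpr le_rfl, fun c hc => Fin.le_def.mpr ((fCand_splitRowTab h).mp hc)⟩
  rw [fOp_eq_of_isLeast hleast]
  congr 1
  funext r' c
  by_cases hr : r' = r
  · simp only [splitRowTab, hr, if_true, Fin.ext_iff]
    split_ifs <;> omega
  · simp [splitRowTab, hr, (h r' hr).1]

lemma eOp_splitRowTab {m : ℕ} (hm : m < k) :
    eOp i (splitRowTab (k := k) i a r (m + 1)) = some (splitRowTab i a r m) := by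
  have hgreatest : IsGreatest {c | eCand i (splitRowTab i a r (m + 1)) c} ⟨m, hm⟩ :=
    ⟨(eCand_splitRowTab h).mpr m.lt_succ_self,
      fun c hc => Fin.le_def.mpr (Nat.le_of_lt_succ ((eCand_splitRowTab h).mp hc))⟩
  rw [eOp_eq_of_isGreatest hgreatest]
  congr 1
  funext r' c
  by_cases hr : r' = r
  · simp only [splitRowTab, hr, if_true, Fin.ext_iff]
    split_ifs <;> omega
  · simp [splitRowTab, hr, (h r' hr).2]

lemma wtPair_splitRowTab_zero : wtPair i (splitRowTab (k := k) i a r 0) = k := by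
  have h₀ : #{r' | update a r i r' = i} = 1 := by
    refine card_eq_one.mpr ⟨r, ?_⟩
    ext r'
    by_cases hr : r' = r <;> simp [hr, (h r' _).1]
  have h₁ : #{r' | update a r i r' = i + 1} = 0 := by
    rw [card_eq_zero, filter_eq_empty_iff]
    intro r' _
    by_cases hr : r' = r <;> simp [hr, (h r' _).2]
  rw [← constRowTab_update_eq_splitRowTab_zero, wtPair_constRowTab, h₀, h₁]
  simp

lemma wtPair_splitRowTab_length : wtPair i (splitRowTab (k := k) i a r k) = -k := by
  have h₀ : #{r' | update a r (i + 1) r' = i} = 0 := by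
    rw [card_eq_zero, filter_eq_empty_iff]
    intro r' _
    by_cases hr : r' = r <;> simp [hr, (h r' _).1]
  have h₁ : #{r' | update a r (i + 1) r' = i + 1} = 1 := by
    refine card_eq_one.mpr ⟨r, ?_⟩
    ext r'
    by_cases hr : r' = r <;> simp [hr, (h r' _).2]
  rw [← constRowTab_update_eq_splitRowTab_length, wtPair_constRowTab, h₀, h₁]
  simp

lemma SOp_splitRowTab_zero :
    SOp i (splitRowTab (k := k) i a r 0) = some (splitRowTab i a r k) := by
  rw [SOp, wtPair_splitRowTab_zero h, if_pos (Int.natCast_nonneg k), Int.toNat_natCast]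
  exact iterOpt_eq_of_step fun m hm => fOp_splitRowTab h hm

lemma SOp_splitRowTab_length :
    SOp i (splitRowTab (k := k) i a r k) = some (splitRowTab i a r 0) := by
  rcases k.eq_zero_or_pos with rfl | hk
  · exact SOp_eq_self_of_wtPair_eq_zero ((wtPair_splitRowTab_length h).trans (by simp))
  rw [SOp, wtPair_splitRowTab_length h, if_neg (by omega), neg_neg, Int.toNat_natCast]
  -- `ẽ_i` runs through the same tableaux as `f̃_i`, backwards
  have hstep : ∀ m < k, eOp i (splitRowTab (k := k) i a r (k - m)) =
      some (splitRowTab i a r (k - (m + 1))) := fun m hm => by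
    rw [show k - m = k - (m + 1) + 1 by omega]
    exact eOp_splitRowTab h (by omega)
  simpa using iterOpt_eq_of_step (g := fun m => splitRowTab (k := k) i a r (k - m)) hstep

end SplitRow
lemma SOp_constRowTab_of_apply_eq {a : Fin ℓ → ℤ} {r : Fin ℓ} {i : ℤ} (hr : a r = i)
    (h : ∀ r' ≠ r, a r' ≠ i ∧ a r' ≠ i + 1) :
    SOp i (constRowTab k a) = some (constRowTab k (update a r (i + 1))) := by
  subst hr
  have := SOp_splitRowTab_zero (k := k) h
  rwa [← constRowTab_update_eq_splitRowTab_zero, ← constRowTab_update_eq_splitRowTab_length,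
    update_eq_self] at this

lemma SOp_constRowTab_of_apply_eq_add_one {a : Fin ℓ → ℤ} {r : Fin ℓ} {i : ℤ}
    (hr : a r = i + 1) (h : ∀ r' ≠ r, a r' ≠ i ∧ a r' ≠ i + 1) :
    SOp i (constRowTab k a) = some (constRowTab k (update a r i)) := by
  have := SOp_splitRowTab_length (k := k) h
  rwa [← constRowTab_update_eq_splitRowTab_zero, ← constRowTab_update_eq_splitRowTab_length,
    ← hr, update_eq_self] at this

lemma card_filter_apply_eq_of_injective {a : Fin ℓ → ℤ} (ha : Injective a) (r : Fin ℓ) :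
    #{r' | a r' = a r} = 1 :=
  card_eq_one.mpr ⟨r, by ext; simp [ha.eq_iff]⟩

lemma exists_SOp_constRowTab {a : Fin ℓ → ℤ} (ha : StrictMono a) (i : ℤ) :
    ∃ a', StrictMono a' ∧ SOp i (constRowTab k a) = some (constRowTab k a') := by
  by_cases hi : ∃ r, a r = i <;> by_cases hi₁ : ∃ r, a r = i + 1
  · obtain ⟨r, rfl⟩ := hi
    obtain ⟨r₁, hr₁⟩ := hi₁
    refine ⟨a, ha, SOp_eq_self_of_wtPair_eq_zero ?_⟩
    rw [wtPair_constRowTab, ← hr₁, card_filter_apply_eq_of_injective ha.injective,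
      card_filter_apply_eq_of_injective ha.injective]
    simp
  · obtain ⟨r, rfl⟩ := hi
    push Not at hi₁
    refine ⟨update a r (a r + 1), ha.update_of_lt_of_lt (fun s hs => (ha hs).trans (lt_add_one _))
      (fun t ht => lt_of_le_of_ne (ha ht) (hi₁ t).symm),
      SOp_constRowTab_of_apply_eq rfl fun r' hr' => ⟨ha.injective.ne hr', hi₁ r'⟩⟩
  · obtain ⟨r, hr⟩ := hi₁
    push Not at hi
    refine ⟨update a r i, ha.update_of_lt_of_lt
      (fun s hs => lt_of_le_of_ne (Int.le_of_lt_add_one (hr ▸ ha hs)) (hi s))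
      (fun t ht => (lt_add_one i).trans (hr ▸ ha ht)),
      SOp_constRowTab_of_apply_eq_add_one hr fun r' hr' => ⟨hi r', hr ▸ ha.injective.ne hr'⟩⟩
  · push Not at hi hi₁
    refine ⟨a, ha, SOp_eq_self_of_wtPair_eq_zero ?_⟩
    rw [wtPair_constRowTab, card_eq_zero.mpr (filter_eq_empty_iff.mpr fun r _ => hi r),
      card_eq_zero.mpr (filter_eq_empty_iff.mpr fun r _ => hi₁ r)]
    simp

def UnitMove (a b : Fin ℓ → ℤ) : Prop :=
  StrictMono a ∧ StrictMono b ∧ ∃ r, (∀ r' ≠ r, a r' = b r') ∧ (b r = a r + 1 ∨ a r = b r + 1)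

lemma UnitMove.symm {a b : Fin ℓ → ℤ} (h : UnitMove a b) : UnitMove b a :=
  let ⟨ha, hb, r, hr, hab⟩ := h
  ⟨hb, ha, r, fun r' h' => (hr r' h').symm, hab.symm⟩

lemma UnitMove.exists_SOp {a b : Fin ℓ → ℤ} (hab : UnitMove a b) :
    ∃ i, SOp i (constRowTab k a) = some (constRowTab k b) := by
  obtain ⟨ha, hb, r, hr, hup | hdown⟩ := hab
  · refine ⟨a r, ?_⟩
    rw [SOp_constRowTab_of_apply_eq rfl fun r' h' =>
      ⟨ha.injective.ne h', hup ▸ hr r' h' ▸ hb.injective.ne h'⟩, update_eq_iff.mpr ⟨hup.symm, hr⟩]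
  · refine ⟨b r, ?_⟩
    rw [SOp_constRowTab_of_apply_eq_add_one hdown fun r' h' =>
      ⟨hr r' h' ▸ hb.injective.ne h', hdown ▸ ha.injective.ne h'⟩, update_eq_iff.mpr ⟨rfl, hr⟩]

def l1Dist (a b : Fin ℓ → ℤ) : ℕ := ∑ r, (a r - b r).natAbs

lemma l1Dist_comm (a b : Fin ℓ → ℤ) : l1Dist a b = l1Dist b a :=
  sum_congr rfl fun _ _ => by omega

lemma unitMove_update_sub_one {a b : Fin ℓ → ℤ} (ha : StrictMono a) (hb : StrictMono b)
    {r : Fin ℓ} (hagree : ∀ s < r, a s = b s) (hlt : b r < a r) :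
    UnitMove a (update a r (a r - 1)) ∧ l1Dist (update a r (a r - 1)) b < l1Dist a b := by
  have hmono : StrictMono (update a r (a r - 1)) :=
    ha.update_of_lt_of_lt (fun s hs => by have := hagree s hs; have := hb hs; omega)
      (fun t ht => by have := ha ht; omega)
  refine ⟨⟨ha, hmono, r, fun r' h => (update_of_ne h _ _).symm, Or.inr (by simp)⟩, ?_⟩
  apply sum_lt_sum
  · intro s _
    by_cases hs : s = r
    · subst hs; simp only [update_self]; omega
    · simp [hs]
  · exact ⟨r, mem_univ _, by simp only [update_self]; omega⟩

lemma reflTransGen_unitMove {a b : Fin ℓ → ℤ} (ha : StrictMono a) (hb : StrictMono b) :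
    Relation.ReflTransGen UnitMove a b := by
  induction hn : l1Dist a b using Nat.strong_induction_on generalizing a b with
  | _ n ih =>
  by_cases hab : a = b
  · exact hab ▸ .refl
  obtain ⟨r, hne, hmin⟩ := wellFounded_lt.has_min {r | a r ≠ b r} (ne_iff.mp hab)
  have hagree : ∀ s < r, a s = b s := fun s hs => not_not.mp fun h => hmin s h hs
  rcases lt_or_gt_of_ne hne with hlt | hlt
  · obtain ⟨hmove, hdist⟩ := unitMove_update_sub_one hb ha (fun s hs => (hagree s hs).symm) hlt
    rw [l1Dist_comm _ a, l1Dist_comm b] at hdist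
    exact (ih _ (hn ▸ hdist) ha hmove.2.1 rfl).tail hmove.symm
  · obtain ⟨hmove, hdist⟩ := unitMove_update_sub_one ha hb hagree hlt
    exact .head hmove (ih _ (hn ▸ hdist) hmove.2.1 hb rfl)

end WeylOrbitTe

open WeylOrbitTe

theorem weyl_orbit_Te_general (ℓ k : ℕ) (T : Fin ℓ → Fin k → ℤ) :
    Relation.ReflTransGen (fun A B => ∃ i : ℤ, SOp i A = some B) (Te ℓ k) T ↔
      ((∀ c : Fin k, StrictMono (fun r => T r c)) ∧
        ∀ (r : Fin ℓ) (c c' : Fin k), T r c = T r c') := by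
  have hTe : StrictMono fun r : Fin ℓ => (r : ℤ) + 1 := fun _ _ h => by simpa using h
  rw [constRowTab_iff_exists]
  constructor
  · intro h
    induction h with
    | refl => exact ⟨_, hTe, rfl⟩
    | tail _ hstep ih =>
      obtain ⟨i, hi⟩ := hstep
      obtain ⟨a, ha, rfl⟩ := ih
      obtain ⟨a', ha', hS⟩ := exists_SOp_constRowTab (k := k) ha i
      exact ⟨a', ha', Option.some_injective _ (hi.symm.trans hS)⟩
  · rintro ⟨a, ha, rfl⟩
    exact (reflTransGen_unitMove hTe ha).lift (constRowTab k) fun _ _ h => h.exists_SOp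

/-- In the crystal of semi-standard tableaux of rectangular shape `ℓ × k`, the
Weyl group orbit `W · T^e` — the set of tableaux reachable from `T^e` by the string
operators `S_i` — consists exactly of the semi-standard tableaux with constant
rows, i.e. `T_{i,1} = T_{i,2} = ⋯ = T_{i,k}` for all `i` (and strictly increasing
columns). -/
theorem weyl_orbit_Te (ℓ k : ℕ) (hl : 1 ≤ ℓ) (hk : 1 ≤ k) (T : Fin ℓ → Fin k → ℤ) :
    Relation.ReflTransGen (fun A B => ∃ i : ℤ, SOp i A = some B) (Te ℓ k) T ↔
      ((∀ c : Fin k, StrictMono (fun r => T r c)) ∧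
        ∀ (r : Fin ℓ) (c c' : Fin k), T r c = T r c') :=
  weyl_orbit_Te_general ℓ k T
end
end

section
/- Let ℓ ≥ 1. The set M(Y_{ℓ,a} Y_{0,aq^ℓ}^{-1}) = { m_T = ∏_{1≤j≤ℓ} ⟦i_j⟧_{aq^{ℓ+1−2j}} : T = (i_1 < ⋯ < i_ℓ) ∈ T_{[1,ℓ]} } satisfies: the map T ↦ m_T is injective, i.e. distinct strictly increasing ℓ-tuples give distinct monomials. -/
/-!
Since `q` is not a root of unity, `(x, k) ↦ Y_{x, a q^{x + ℓ - 2 - 2k}}` is injective on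
`ℤ × ℤ`, and in these coordinates the factor `⟦t_j⟧_{a q^{ℓ-1-2j}}` of `m_T` (slots indexed from
`0`) is `Y_{(t_j, j)} Y_{(t_j - 1, j - 1)}⁻¹`. Only the slots `j` and `j + 1` contribute to the
coefficient of `(t_j, j)`, which is `1 - [t_{j+1} = t_j + 1]`; so `m_T` determines the entries
of `T` one at a time, from the last slot downwards.
-/
noncomputable section

/-- The monomial `⟦j⟧_c = Y_{j−1, c q^j}^{−1} Y_{j, c q^{j−1}}` in the free abelian
group `A` on the symbols `Y_{i,c}` (`i ∈ ℤ`, `c ∈ ℂ*`), written additively as an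
element of `(ℤ × ℂ) →₀ ℤ`. -/
def boxMon (q : ℂ) (j : ℤ) (c : ℂ) : (ℤ × ℂ) →₀ ℤ :=
  Finsupp.single (j - 1, c * q ^ j) (-1) + Finsupp.single (j, c * q ^ (j - 1)) 1

/-- The monomial `m_T = ∏_{1 ≤ j ≤ ℓ} ⟦i_j⟧_{a q^{ℓ+1−2j}}` attached to an
`ℓ`-tuple `T = (i_1, …, i_ℓ)`. -/
def mMon (q a : ℂ) (ℓ : ℕ) (t : Fin ℓ → ℤ) : (ℤ × ℂ) →₀ ℤ :=
  ∑ j : Fin ℓ, boxMon q (t j) (a * q ^ ((ℓ : ℤ) + 1 - 2 * ((j : ℤ) + 1)))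

theorem zpow_injective_of_not_isOfFinOrder {G₀ : Type*} [GroupWithZero G₀] {q : G₀}
    (hq0 : q ≠ 0) (hq : ¬IsOfFinOrder q) : Function.Injective (q ^ · : ℤ → G₀) := by
  have hu : ¬IsOfFinOrder (Units.mk0 q hq0) := by rwa [← Units.isOfFinOrder_val]
  intro m n hmn
  refine injective_zpow_iff_not_isOfFinOrder.mpr hu (Units.val_injective ?_)
  simpa only [Units.val_zpow_eq_zpow_val, Units.val_mk0] using hmn

def slotMon (ℓ : ℕ) (t : Fin ℓ → ℤ) : (ℤ × ℤ) →₀ ℤ :=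
  ∑ j : Fin ℓ, (Finsupp.single (t j - 1, (j : ℤ) - 1) (-1) + Finsupp.single (t j, (j : ℤ)) 1)

theorem slotMon_apply (ℓ : ℕ) (t : Fin ℓ → ℤ) (x k : ℤ) :
    slotMon ℓ t (x, k) = ∑ i : Fin ℓ,
      ((if t i - 1 = x ∧ (i : ℤ) - 1 = k then -1 else 0) +
        if t i = x ∧ (i : ℤ) = k then 1 else 0) := by
  simp only [slotMon, Finsupp.finsetSum_apply, Finsupp.add_apply, Finsupp.single_apply,
    Prod.mk.injEq]

theorem slotMon_injective (ℓ : ℕ) : Function.Injective (slotMon ℓ) := by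
  intro t u h
  funext j
  induction j using WellFoundedGT.induction with
  | ind j ih =>
    have hj : slotMon ℓ t (t j, j) - slotMon ℓ u (t j, j) = 0 := by rw [h, sub_self]
    rw [slotMon_apply, slotMon_apply, ← Finset.sum_sub_distrib,
      Finset.sum_eq_single_of_mem j (Finset.mem_univ j)] at hj
    · by_contra hne
      simp [Ne.symm hne] at hj
    · intro i _ hij
      have hij' : (i : ℤ) ≠ j := by exact_mod_cast Fin.val_ne_of_ne hij
      by_cases hsucc : (i : ℤ) - 1 = j
      · rw [ih i (by rw [Fin.lt_def]; omega)]
        exact sub_self _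
      · simp [hsucc, hij']

def slotCoord (q a : ℂ) (ℓ : ℕ) (p : ℤ × ℤ) : ℤ × ℂ :=
  (p.1, a * q ^ (p.1 + ℓ - 2 - 2 * p.2))

theorem slotCoord_injective {q a : ℂ} (hq0 : q ≠ 0) (hq : ¬IsOfFinOrder q) (ha : a ≠ 0)
    (ℓ : ℕ) : Function.Injective (slotCoord q a ℓ) := by
  rintro ⟨x, k⟩ ⟨y, m⟩ h
  obtain ⟨rfl, hpow⟩ := Prod.mk.inj h
  have := zpow_injective_of_not_isOfFinOrder hq0 hq (mul_left_cancel₀ ha hpow)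
  simp only [Prod.mk.injEq, true_and]
  omega

theorem mMon_eq_mapDomain_slotMon {q : ℂ} (hq0 : q ≠ 0) (a : ℂ) (ℓ : ℕ) (t : Fin ℓ → ℤ) :
    mMon q a ℓ t = (slotMon ℓ t).mapDomain (slotCoord q a ℓ) := by
  rw [slotMon, Finsupp.mapDomain_finsetSum]
  refine Finset.sum_congr rfl fun j _ => ?_
  rw [Finsupp.mapDomain_add, Finsupp.mapDomain_single, Finsupp.mapDomain_single, boxMon,
    slotCoord, slotCoord, mul_assoc, mul_assoc, ← zpow_add₀ hq0, ← zpow_add₀ hq0]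
  ring_nf

theorem mMon_injective_general (q a : ℂ) (hq0 : q ≠ 0) (hq : ∀ n : ℕ, 0 < n → q ^ n ≠ 1)
    (ha : a ≠ 0) (ℓ : ℕ) (t u : Fin ℓ → ℤ)
    (h : mMon q a ℓ t = mMon q a ℓ u) : t = u := by
  have hq_inf : ¬IsOfFinOrder q := fun hfin ↦
    let ⟨n, hn, hqn⟩ := hfin.exists_pow_eq_one
    hq n hn hqn
  rw [mMon_eq_mapDomain_slotMon hq0, mMon_eq_mapDomain_slotMon hq0] at h
  exact slotMon_injective ℓ <|
    Finsupp.mapDomain_injective (slotCoord_injective hq0 hq_inf ha ℓ) h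

/-- For `q` not a root of unity and `a ∈ ℂ*`, the assignment `T ↦ m_T` on the set
`T_{[1,ℓ]}` of strictly increasing `ℓ`-tuples of integers is injective: distinct
tuples give distinct monomials. -/
theorem mMon_injective (q a : ℂ) (hq0 : q ≠ 0) (hq : ∀ n : ℕ, 0 < n → q ^ n ≠ 1)
    (ha : a ≠ 0) (ℓ : ℕ) (hl : 1 ≤ ℓ) (t u : Fin ℓ → ℤ)
    (ht : StrictMono t) (hu : StrictMono u)
    (h : mMon q a ℓ t = mMon q a ℓ u) : t = u :=
  mMon_injective_general q a hq0 hq ha ℓ t u h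
end
end

section
/- Fix ℓ,k ≥ 1. In the rectangular crystal T_{[1,ℓ]×[1,k]}, the tableau T^e with T^e_{i,j} = i is extremal of weight kΛ_ℓ − kΛ_0: for any finite sequence of string operators S_{i_1}, …, S_{i_m} applied to T^e, the resulting tableau is i-extremal for every i (either ẽ_i or f̃_i annihilates it after the appropriate power), and the resulting tableaux are exactly those with constant rows. -/
attribute [local instance] Classical.propDecidable

noncomputable section

/-!
A tableau reachable from `T^e` has constant rows, i.e. it is `constRows k g` for a strictly
increasing column `g`. Its `i`-weight is `k · ([i ∈ g] - [i + 1 ∈ g])`, so `S_i` is the identity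
unless exactly one of `i`, `i + 1` occurs in `g`, say `g r = i`; then the `k` applications of `f̃_i`
raise row `r` one box at a time from left to right, through the tableaux whose row `r` reads
`(i+1)^m i^(k-m)` (`raisedPrefix`), and the result is again a constant-row tableau (dually for
`ẽ_i`). Such a tableau is `i`-extremal because either every column contains `i` or none does.
Conversely, any strictly increasing column is reached from `(1, …, ℓ)` by moving single entries by
`±1` into free values, each move shortening the `ℓ¹`-distance to the target.
-/

open Finset Function

theorem iterOpt_eq_of_step {γ : Type*} {op : γ → Option γ} {x : ℕ → γ} {K : ℕ}
    (h : ∀ m < K, op (x m) = some (x (m + 1))) :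
    ∀ n m, m + n ≤ K → iterOpt op n (x m) = some (x (m + n))
  | 0, _, _ => rfl
  | n + 1, m, hle => by
    rw [iterOpt, h m (by omega), Option.bind_some, iterOpt_eq_of_step h n (m + 1) (by omega),
      Nat.add_right_comm, Nat.add_assoc]

theorem iterOpt_eq_of_step_down {γ : Type*} {op : γ → Option γ} {x : ℕ → γ} {K : ℕ}
    (h : ∀ m < K, op (x (m + 1)) = some (x m)) :
    ∀ n m, m + n ≤ K → iterOpt op n (x (m + n)) = some (x m)
  | 0, _, _ => rfl
  | n + 1, m, hle => by
    rw [iterOpt, ← Nat.add_assoc, h (m + n) (by omega), Option.bind_some,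
      iterOpt_eq_of_step_down h n m (by omega)]

section Operators

variable {ℓ k : ℕ} {i : ℤ} {T : Fin ℓ → Fin k → ℤ}

theorem fOp_eq_none_of_forall_not_colPlus (h : ∀ c, ¬ colPlus i T c) : fOp i T = none := by
  have : ¬ (univ.filter (fun c => fCand i T c)).Nonempty := by
    simpa [filter_eq_empty_iff, not_nonempty_iff_eq_empty] using fun c hc => h c hc.1
  simp [fOp, this]

theorem eOp_eq_none_of_forall_not_colMinus (h : ∀ c, ¬ colMinus i T c) : eOp i T = none := by
  have : ¬ (univ.filter (fun c => eCand i T c)).Nonempty := by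
    simpa [filter_eq_empty_iff, not_nonempty_iff_eq_empty] using fun c hc => h c hc.1
  simp [eOp, this]

theorem fOp_eq_of_isLeast {c₀ : Fin k} (h : IsLeast {c | fCand i T c} c₀) :
    fOp i T = some fun r c => if c = c₀ ∧ T r c = i then i + 1 else T r c := by
  have hmem : c₀ ∈ univ.filter (fun c => fCand i T c) := by simpa using h.1
  have hmin : (univ.filter (fun c => fCand i T c)).min' ⟨c₀, hmem⟩ = c₀ :=
    (isLeast_min' _ _).unique (by simpa using h)
  rw [fOp, dif_pos ⟨c₀, hmem⟩, hmin]

theorem eOp_eq_of_isGreatest {c₀ : Fin k} (h : IsGreatest {c | eCand i T c} c₀) :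
    eOp i T = some fun r c => if c = c₀ ∧ T r c = i + 1 then i else T r c := by
  have hmem : c₀ ∈ univ.filter (fun c => eCand i T c) := by simpa using h.1
  have hmax : (univ.filter (fun c => eCand i T c)).max' ⟨c₀, hmem⟩ = c₀ :=
    (isGreatest_max' _ _).unique (by simpa using h)
  rw [eOp, dif_pos ⟨c₀, hmem⟩, hmax]

end Operators

section StringOperator

variable {ℓ k : ℕ} {i : ℤ} {T : Fin ℓ → Fin k → ℤ}

theorem SOp_of_wtPair_eq_natCast {n : ℕ} (h : wtPair i T = n) :
    SOp i T = iterOpt (fOp i) n T := by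
  rw [SOp, if_pos (h ▸ Int.natCast_nonneg n), h, Int.toNat_natCast]

theorem SOp_of_wtPair_eq_neg_natCast {n : ℕ} (h : wtPair i T = -n) :
    SOp i T = iterOpt (eOp i) n T := by
  rw [SOp, h]
  split_ifs with hn
  · obtain rfl : n = 0 := by omega
    rfl
  · rw [neg_neg, Int.toNat_natCast]

theorem SOp_of_wtPair_eq_zero (h : wtPair i T = 0) :
    SOp i T = some T :=
  SOp_of_wtPair_eq_natCast (n := 0) h

end StringOperator

def constRows {ℓ : ℕ} (k : ℕ) (g : Fin ℓ → ℤ) : Fin ℓ → Fin k → ℤ := fun r _ => g r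

section ConstRows

variable {ℓ k : ℕ} {g : Fin ℓ → ℤ}

theorem card_filter_eq_of_injective (hg : Injective g) (i : ℤ) :
    #{r | g r = i} = if i ∈ Set.range g then 1 else 0 := by
  split_ifs with h
  · obtain ⟨r₀, rfl⟩ := h
    simp [hg.eq_iff, filter_eq']
  · simpa [filter_eq_empty_iff] using fun r hr => h ⟨r, hr⟩

theorem wtPair_constRows (i : ℤ) :
    wtPair i (constRows k g) = k * ((#{r | g r = i} : ℤ) - #{r | g r = i + 1}) := by
  have hfilter (j : ℤ) : ({rc : Fin ℓ × Fin k | constRows k g rc.1 rc.2 = j} : Finset _) =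
      ({r | g r = j} : Finset _) ×ˢ univ := by
    ext
    simp only [mem_filter, mem_product, mem_univ, true_and, and_true]
    rfl
  rw [wtPair, hfilter, hfilter, card_product, card_product, card_univ, Fintype.card_fin]
  push_cast
  ring

theorem wtPair_constRows_of_injective (hg : Injective g) (i : ℤ) :
    wtPair i (constRows k g) =
      k * ((if i ∈ Set.range g then 1 else 0) - if i + 1 ∈ Set.range g then 1 else 0) := by
  rw [wtPair_constRows, card_filter_eq_of_injective hg, card_filter_eq_of_injective hg]
  simp only [Nat.cast_ite, Nat.cast_one, Nat.cast_zero]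

theorem eOp_eq_none_or_fOp_eq_none_constRows (g : Fin ℓ → ℤ) (i : ℤ) :
    eOp i (constRows k g) = none ∨ fOp i (constRows k g) = none := by
  by_cases hi : i ∈ Set.range g
  · obtain ⟨r, hr⟩ := hi
    exact .inl <| eOp_eq_none_of_forall_not_colMinus fun c hc => hc.2 r hr
  · exact .inr <| fOp_eq_none_of_forall_not_colPlus fun c ⟨⟨r, hr⟩, _⟩ => hi ⟨r, hr⟩

end ConstRows

def raisedPrefix {ℓ : ℕ} (k : ℕ) (g : Fin ℓ → ℤ) (r₀ : Fin ℓ) (i : ℤ) (m : ℕ) :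
    Fin ℓ → Fin k → ℤ :=
  fun r c => update g r₀ (if (c : ℕ) < m then i + 1 else i) r

section RaisedPrefix

variable {ℓ k : ℕ} {g : Fin ℓ → ℤ} {r₀ : Fin ℓ} {i : ℤ} {m : ℕ}

theorem raisedPrefix_zero : raisedPrefix k g r₀ i 0 = constRows k (update g r₀ i) := by
  funext r c
  simp [raisedPrefix, constRows]

theorem raisedPrefix_self : raisedPrefix k g r₀ i k = constRows k (update g r₀ (i + 1)) := by
  funext r c
  simp [raisedPrefix, constRows]

variable (hrows : ∀ r ≠ r₀, g r ≠ i ∧ g r ≠ i + 1)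
include hrows

theorem raisedPrefix_eq_iff {r : Fin ℓ} {c : Fin k} :
    raisedPrefix k g r₀ i m r c = i ↔ r = r₀ ∧ m ≤ c := by
  by_cases hr : r = r₀
  · subst hr
    simp [raisedPrefix]
  · simp [raisedPrefix, hr, (hrows r hr).1]

theorem raisedPrefix_eq_add_one_iff {r : Fin ℓ} {c : Fin k} :
    raisedPrefix k g r₀ i m r c = i + 1 ↔ r = r₀ ∧ (c : ℕ) < m := by
  by_cases hr : r = r₀
  · subst hr
    simp [raisedPrefix]
  · simp [raisedPrefix, hr, (hrows r hr).2]

theorem colPlus_raisedPrefix_iff {c : Fin k} :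
    colPlus i (raisedPrefix k g r₀ i m) c ↔ m ≤ c := by
  simp [colPlus, raisedPrefix_eq_iff hrows, raisedPrefix_eq_add_one_iff hrows]

theorem colMinus_raisedPrefix_iff {c : Fin k} :
    colMinus i (raisedPrefix k g r₀ i m) c ↔ (c : ℕ) < m := by
  simp [colMinus, raisedPrefix_eq_iff hrows, raisedPrefix_eq_add_one_iff hrows]

theorem fCand_raisedPrefix_iff {c : Fin k} :
    fCand i (raisedPrefix k g r₀ i m) c ↔ m ≤ c := by
  refine ⟨fun h => (colPlus_raisedPrefix_iff hrows).1 h.1,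
    fun hc => ⟨(colPlus_raisedPrefix_iff hrows).2 hc, fun c' _ => ?_⟩⟩
  have : ∀ d ∈ Ioc c c', ¬ colMinus i (raisedPrefix k g r₀ i m) d := fun d hd => by
    rw [colMinus_raisedPrefix_iff hrows, not_lt]
    exact hc.trans (mem_Ioc.1 hd).1.le
  simp [filter_eq_empty_iff.2 this]

theorem eCand_raisedPrefix_iff {c : Fin k} :
    eCand i (raisedPrefix k g r₀ i m) c ↔ (c : ℕ) < m := by
  refine ⟨fun h => (colMinus_raisedPrefix_iff hrows).1 h.1,
    fun hc => ⟨(colMinus_raisedPrefix_iff hrows).2 hc, fun c' _ => ?_⟩⟩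
  have : ∀ d ∈ Ico c' c, ¬ colPlus i (raisedPrefix k g r₀ i m) d := fun d hd => by
    rw [colPlus_raisedPrefix_iff hrows, not_le]
    exact lt_trans (mem_Ico.1 hd).2 hc
  simp [filter_eq_empty_iff.2 this]

theorem fOp_raisedPrefix (hm : m < k) :
    fOp i (raisedPrefix k g r₀ i m) = some (raisedPrefix k g r₀ i (m + 1)) := by
  have hleast : IsLeast {c | fCand i (raisedPrefix k g r₀ i m) c} ⟨m, hm⟩ :=
    ⟨(fCand_raisedPrefix_iff hrows).2 le_rfl, fun c hc => (fCand_raisedPrefix_iff hrows).1 hc⟩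
  rw [fOp_eq_of_isLeast hleast]
  congr 1
  funext r c
  simp only [raisedPrefix_eq_iff hrows]
  by_cases hr : r = r₀
  · subst hr
    simp only [raisedPrefix, update_self, Fin.ext_iff, true_and]
    split_ifs <;> omega
  · simp [raisedPrefix, hr]

theorem eOp_raisedPrefix (hm : m < k) :
    eOp i (raisedPrefix k g r₀ i (m + 1)) = some (raisedPrefix k g r₀ i m) := by
  have hgreatest : IsGreatest {c | eCand i (raisedPrefix k g r₀ i (m + 1)) c} ⟨m, hm⟩ :=
    ⟨(eCand_raisedPrefix_iff hrows).2 m.lt_succ_self,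
      fun c hc => Nat.lt_succ_iff.1 ((eCand_raisedPrefix_iff hrows).1 hc)⟩
  rw [eOp_eq_of_isGreatest hgreatest]
  congr 1
  funext r c
  simp only [raisedPrefix_eq_add_one_iff hrows]
  by_cases hr : r = r₀
  · subst hr
    simp only [raisedPrefix, update_self, Fin.ext_iff, true_and]
    split_ifs <;> omega
  · simp [raisedPrefix, hr]

end RaisedPrefix

section StringOnConstRows

variable {ℓ k : ℕ} {g : Fin ℓ → ℤ} {r₀ : Fin ℓ}

theorem SOp_constRows_raise (hg : Injective g) (hfree : g r₀ + 1 ∉ Set.range g) :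
    SOp (g r₀) (constRows k g) = some (constRows k (update g r₀ (g r₀ + 1))) := by
  have hrows : ∀ r ≠ r₀, g r ≠ g r₀ ∧ g r ≠ g r₀ + 1 := fun r hr =>
    ⟨hg.ne hr, fun h => hfree ⟨r, h⟩⟩
  have hwt : wtPair (g r₀) (constRows k g) = k := by
    simp [wtPair_constRows_of_injective hg, hfree]
  have hstart : constRows k g = raisedPrefix k g r₀ (g r₀) 0 := by
    rw [raisedPrefix_zero, update_eq_self]
  rw [SOp_of_wtPair_eq_natCast hwt, hstart,
    iterOpt_eq_of_step (x := raisedPrefix k g r₀ (g r₀)) (fun m hm => fOp_raisedPrefix hrows hm)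
      k 0 (by omega), zero_add, raisedPrefix_self]

theorem SOp_constRows_lower (hg : Injective g) (hfree : g r₀ - 1 ∉ Set.range g) :
    SOp (g r₀ - 1) (constRows k g) = some (constRows k (update g r₀ (g r₀ - 1))) := by
  have hrows : ∀ r ≠ r₀, g r ≠ g r₀ - 1 ∧ g r ≠ g r₀ - 1 + 1 := fun r hr =>
    ⟨fun h => hfree ⟨r, h⟩, by simpa using hg.ne hr⟩
  have hwt : wtPair (g r₀ - 1) (constRows k g) = -k := by
    simp [wtPair_constRows_of_injective hg, hfree]
  have hstart : constRows k g = raisedPrefix k g r₀ (g r₀ - 1) (0 + k) := by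
    rw [zero_add, raisedPrefix_self, sub_add_cancel, update_eq_self]
  rw [SOp_of_wtPair_eq_neg_natCast hwt, hstart,
    iterOpt_eq_of_step_down (x := raisedPrefix k g r₀ (g r₀ - 1))
      (fun m hm => eOp_raisedPrefix hrows hm) k 0 (by omega), raisedPrefix_zero]

end StringOnConstRows

theorem strictMono_update {α β : Type*} [LinearOrder α] [Preorder β] [DecidableEq α]
    {g : α → β} (hg : StrictMono g) {a : α} {v : β} (hlt : ∀ b < a, g b < v)
    (hgt : ∀ b, a < b → v < g b) : StrictMono (update g a v) := by
  intro x y hxy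
  simp only [update_apply]
  split_ifs with hx hy hy
  · exact absurd (hx.trans hy.symm) hxy.ne
  · exact hgt y (hx ▸ hxy)
  · exact hlt x (hy ▸ hxy)
  · exact hg hxy

theorem StrictMono.update_add_one {α : Type*} [LinearOrder α] [DecidableEq α] {g : α → ℤ}
    (hg : StrictMono g) {a : α} (hfree : g a + 1 ∉ Set.range g) :
    StrictMono (update g a (g a + 1)) :=
  strictMono_update hg (fun b hb => (hg hb).trans (lt_add_one _)) fun b hb => by
    have := hg hb
    have : g b ≠ g a + 1 := fun h => hfree ⟨b, h⟩
    omega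

theorem StrictMono.update_sub_one {α : Type*} [LinearOrder α] [DecidableEq α] {g : α → ℤ}
    (hg : StrictMono g) {a : α} (hfree : g a - 1 ∉ Set.range g) :
    StrictMono (update g a (g a - 1)) :=
  strictMono_update hg (fun b hb => by
    have := hg hb
    have : g b ≠ g a - 1 := fun h => hfree ⟨b, h⟩
    omega) fun b hb => (sub_one_lt _).trans (hg hb)

def StringStep {ℓ k : ℕ} (A B : Fin ℓ → Fin k → ℤ) : Prop := ∃ i : ℤ, SOp i A = some B

section Reachability

variable {ℓ k : ℕ}

theorem StringStep.exists_eq_constRows {g : Fin ℓ → ℤ} (hg : StrictMono g)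
    {B : Fin ℓ → Fin k → ℤ} (h : StringStep (constRows k g) B) :
    ∃ g', StrictMono g' ∧ B = constRows k g' := by
  obtain ⟨i, h⟩ := h
  have hfixed (hw : wtPair i (constRows k g) = 0) : ∃ g', StrictMono g' ∧ B = constRows k g' := by
    rw [SOp_of_wtPair_eq_zero hw, Option.some_inj] at h
    exact ⟨g, hg, h.symm⟩
  have hwt := wtPair_constRows_of_injective (k := k) hg.injective i
  by_cases hi : i ∈ Set.range g <;> by_cases hi1 : i + 1 ∈ Set.range g
  · exact hfixed (by simp [hwt, hi, hi1])
  · obtain ⟨r₀, rfl⟩ := hi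
    rw [SOp_constRows_raise hg.injective hi1, Option.some_inj] at h
    exact ⟨_, hg.update_add_one hi1, h.symm⟩
  · obtain ⟨r₀, hr₀⟩ := hi1
    obtain rfl : i = g r₀ - 1 := by omega
    rw [SOp_constRows_lower hg.injective hi, Option.some_inj] at h
    exact ⟨_, hg.update_sub_one hi, h.symm⟩
  · exact hfixed (by simp [hwt, hi, hi1])

theorem exists_eq_constRows_of_reflTransGen {g : Fin ℓ → ℤ} (hg : StrictMono g)
    {T : Fin ℓ → Fin k → ℤ} (h : Relation.ReflTransGen StringStep (constRows k g) T) :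
    ∃ g', StrictMono g' ∧ T = constRows k g' := by
  induction h with
  | refl => exact ⟨g, hg, rfl⟩
  | tail _ hstep ih =>
    obtain ⟨g', hg', rfl⟩ := ih
    exact hstep.exists_eq_constRows hg'

theorem exists_lt_and_add_one_notMem_range {s t : Fin ℓ → ℤ} (hs : StrictMono s) (ht : StrictMono t)
    (hlt : ∃ r, s r < t r) : ∃ r, s r < t r ∧ s r + 1 ∉ Set.range s := by
  obtain ⟨r, hr, hmax⟩ := (univ.filter fun r => s r < t r).exists_max_image id
    (by simpa [Finset.Nonempty] using hlt)
  rw [mem_filter] at hr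
  -- `r` is the last row below its target: later rows sit at or above targets exceeding `s r + 1`.
  refine ⟨r, hr.2, fun ⟨r', hr'⟩ => ?_⟩
  rcases lt_trichotomy r' r with h | rfl | h
  · have := hs h
    omega
  · omega
  · have hle : t r' ≤ s r' := not_lt.1 fun h' => not_le.2 h (hmax r' (by simpa using h'))
    have := ht h
    omega

theorem exists_lt_and_sub_one_notMem_range {s t : Fin ℓ → ℤ} (hs : StrictMono s) (ht : StrictMono t)
    (hle : ∀ r, t r ≤ s r) (hne : s ≠ t) : ∃ r, t r < s r ∧ s r - 1 ∉ Set.range s := by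
  have hgt : ∃ r, t r < s r := by
    by_contra! h
    exact hne (funext fun r => le_antisymm (h r) (hle r))
  obtain ⟨r, hr, hmin⟩ := (univ.filter fun r => t r < s r).exists_min_image id
    (by simpa [Finset.Nonempty] using hgt)
  rw [mem_filter] at hr
  refine ⟨r, hr.2, fun ⟨r', hr'⟩ => ?_⟩
  rcases lt_trichotomy r' r with h | rfl | h
  · have hr'le : s r' ≤ t r' := not_lt.1 fun h' => not_le.2 h (hmin r' (by simpa using h'))
    have := ht h
    omega
  · omega
  · have := hs h
    omega

theorem sum_natAbs_sub_update_lt {α : Type*} [Fintype α] [DecidableEq α] {s t : α → ℤ} {a : α}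
    {v : ℤ} (h : (t a - v).natAbs < (t a - s a).natAbs) :
    ∑ r, (t r - update s a v r).natAbs < ∑ r, (t r - s r).natAbs := by
  refine sum_lt_sum (fun r _ => ?_) ⟨a, mem_univ a, by simpa using h⟩
  rcases eq_or_ne r a with rfl | hr
  · simpa using h.le
  · simp [hr]

theorem reflTransGen_constRows {s t : Fin ℓ → ℤ} (hs : StrictMono s) (ht : StrictMono t) :
    Relation.ReflTransGen StringStep (constRows k s) (constRows k t) := by
  by_cases hst : s = t
  · rw [hst]
  by_cases hlt : ∃ r, s r < t r
  · obtain ⟨r, hr, hfree⟩ := exists_lt_and_add_one_notMem_range hs ht hlt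
    have hdist : (t r - (s r + 1)).natAbs < (t r - s r).natAbs := by omega
    exact .head ⟨s r, SOp_constRows_raise hs.injective hfree⟩
      (reflTransGen_constRows (hs.update_add_one hfree) ht)
  · simp only [not_exists, not_lt] at hlt
    obtain ⟨r, hr, hfree⟩ := exists_lt_and_sub_one_notMem_range hs ht hlt hst
    have hdist : (t r - (s r - 1)).natAbs < (t r - s r).natAbs := by omega
    exact .head ⟨s r - 1, SOp_constRows_lower hs.injective hfree⟩
      (reflTransGen_constRows (hs.update_sub_one hfree) ht)
termination_by ∑ r, (t r - s r).natAbs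
decreasing_by all_goals exact sum_natAbs_sub_update_lt hdist

end Reachability

theorem exists_strictMono_eq_constRows {ℓ k : ℕ} {T : Fin ℓ → Fin k → ℤ}
    (hcol : ∀ c, StrictMono fun r => T r c) (hrow : ∀ r c c', T r c = T r c') :
    ∃ g, StrictMono g ∧ T = constRows k g := by
  cases k with
  | zero => exact ⟨fun r => r, fun _ _ h => by simpa using h, funext fun _ => funext nofun⟩
  | succ k => exact ⟨fun r => T r 0, hcol 0, funext fun r => funext fun c => hrow r c 0⟩

theorem Te_eq_constRows (ℓ k : ℕ) : Te ℓ k = constRows k fun r : Fin ℓ => (r : ℤ) + 1 := rfl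

theorem strictMono_natCast_add_one (ℓ : ℕ) : StrictMono fun r : Fin ℓ => (r : ℤ) + 1 :=
  fun _ _ h => by simpa using h

theorem wtPair_Te {ℓ : ℕ} (k : ℕ) (hl : 1 ≤ ℓ) (i : ℤ) :
    wtPair i (Te ℓ k) = if i = (ℓ : ℤ) then (k : ℤ) else if i = 0 then -(k : ℤ) else 0 := by
  have hrange (j : ℤ) : j ∈ Set.range (fun r : Fin ℓ => (r : ℤ) + 1) ↔ 1 ≤ j ∧ j ≤ ℓ := by
    refine ⟨fun ⟨r, hr⟩ => ?_, fun hj => ⟨⟨(j - 1).toNat, by omega⟩, by simp; omega⟩⟩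
    have := r.isLt
    simp only at hr
    omega
  rw [Te_eq_constRows, wtPair_constRows_of_injective (strictMono_natCast_add_one ℓ).injective]
  simp only [hrange]
  split_ifs <;> omega

theorem Te_extremal_general (ℓ k : ℕ) (hl : 1 ≤ ℓ) :
    (∀ i : ℤ, wtPair i (Te ℓ k) =
      if i = (ℓ : ℤ) then (k : ℤ) else if i = 0 then -(k : ℤ) else 0) ∧
    (∀ T : Fin ℓ → Fin k → ℤ,
      Relation.ReflTransGen (fun A B => ∃ i : ℤ, SOp i A = some B) (Te ℓ k) T →
        ∀ i : ℤ, eOp i T = none ∨ fOp i T = none) ∧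
    (∀ T : Fin ℓ → Fin k → ℤ,
      Relation.ReflTransGen (fun A B => ∃ i : ℤ, SOp i A = some B) (Te ℓ k) T ↔
        ((∀ c : Fin k, StrictMono (fun r => T r c)) ∧
          ∀ (r : Fin ℓ) (c c' : Fin k), T r c = T r c')) := by
  have hTe := strictMono_natCast_add_one ℓ
  refine ⟨wtPair_Te k hl, fun T hT i => ?_, fun T => ⟨fun hT => ?_, fun ⟨hcol, hrow⟩ => ?_⟩⟩
  · obtain ⟨g, -, rfl⟩ := exists_eq_constRows_of_reflTransGen hTe hT
    exact eOp_eq_none_or_fOp_eq_none_constRows g i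
  · obtain ⟨g, hg, rfl⟩ := exists_eq_constRows_of_reflTransGen hTe hT
    exact ⟨fun _ => hg, fun _ _ _ => rfl⟩
  · obtain ⟨g, hg, rfl⟩ := exists_strictMono_eq_constRows hcol hrow
    exact reflTransGen_constRows hTe hg

/-- The tableau `T^e` (with `T_{i,j} = i`) in the rectangular crystal
`T_{[1,ℓ]×[1,k]}` is extremal of weight `kΛ_ℓ − kΛ_0`:
its weight pairs with `h_i` as `k δ_{i,ℓ} − k δ_{i,0}`; every tableau obtained from
`T^e` by a finite sequence of string operators `S_{i_1}, …, S_{i_m}` is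
`i`-extremal for every `i` (it is annihilated by `ẽ_i` or by `f̃_i`); and the
tableaux so obtained are exactly the semi-standard tableaux with constant rows. -/
theorem Te_extremal (ℓ k : ℕ) (hl : 1 ≤ ℓ) (hk : 1 ≤ k) :
    (∀ i : ℤ, wtPair i (Te ℓ k) =
      if i = (ℓ : ℤ) then (k : ℤ) else if i = 0 then -(k : ℤ) else 0) ∧
    (∀ T : Fin ℓ → Fin k → ℤ,
      Relation.ReflTransGen (fun A B => ∃ i : ℤ, SOp i A = some B) (Te ℓ k) T →
        ∀ i : ℤ, eOp i T = none ∨ fOp i T = none) ∧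
    (∀ T : Fin ℓ → Fin k → ℤ,
      Relation.ReflTransGen (fun A B => ∃ i : ℤ, SOp i A = some B) (Te ℓ k) T ↔
        ((∀ c : Fin k, StrictMono (fun r => T r c)) ∧
          ∀ (r : Fin ℓ) (c c' : Fin k), T r c = T r c')) :=
  Te_extremal_general ℓ k hl
end
end
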